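/- arXiv:1004.5011 — 3 statements merged into one kernel-verified Lean document; each statement's English description precedes it below -/
import Mathlib

section
/- For 0 ≤ α < β < 1/2, P(L_n^{α,β} = 0) → 1 as n → ∞. -/
open MeasureTheory ProbabilityTheory

/-- Probability that one merging event turns the partition `p` (with `k` blocks) into `p'`:
two uniformly random distinct blocks of `p` are merged. -/
noncomputable def mergeProb (n k : ℕ) (p p' : Finset (Finset (Fin n))) : ℝ :=
  (Nat.card {q : Finset (Fin n) × Finset (Fin n) //
      q.1 ∈ p ∧ q.2 ∈ p ∧ q.1 ≠ q.2 ∧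
      p' = insert (q.1 ∪ q.2) ((p.erase q.1).erase q.2)} : ℝ) / ((k : ℝ) * ((k : ℝ) - 1))

/-- The partition chain of Kingman's `n`-coalescent: `P n` is a.s. the partition of
`{1, …, n}` into singletons, and `P (k-1)` arises from `P k` by merging two uniformly
random blocks, conditionally on the whole history. Partitions are modeled as finite sets
of blocks. -/
def IsKingmanPartition (n : ℕ) {Ω : Type*} [MeasurableSpace Ω] (μ : Measure Ω)
    (P : ℕ → Ω → Finset (Finset (Fin n))) : Prop :=
  (∀ k p, MeasurableSet {ω | P k ω = p}) ∧
  (∀ᵐ ω ∂μ, P n ω = Finset.univ.image (fun i : Fin n => {i})) ∧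
  ∀ k, 2 ≤ k → k ≤ n → ∀ p : ℕ → Finset (Finset (Fin n)), ∀ p' : Finset (Finset (Fin n)),
    (μ ({ω | ∀ j, k ≤ j → j ≤ n → P j ω = p j} ∩ {ω | P (k - 1) ω = p'})).toReal
      = (μ {ω | ∀ j, k ≤ j → j ≤ n → P j ω = p j}).toReal * mergeProb n k (p k) p'

/-- `rho n P i ω` is the level of the internal node of the external branch at leaf `i`:
the largest `k ≥ 1` such that `{i}` is not a block of `π_k`. -/
noncomputable def rho (n : ℕ) {Ω : Type*} (P : ℕ → Ω → Finset (Finset (Fin n)))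
    (i : Fin n) (ω : Ω) : ℕ :=
  sSup {k | 1 ≤ k ∧ k ≤ n ∧ {i} ∉ P k ω}

/-- `Xcount n P k ω = #{i : ρ(i) = k}`, the number of external branches whose internal
node is at level `k`. -/
noncomputable def Xcount (n : ℕ) {Ω : Type*} (P : ℕ → Ω → Finset (Finset (Fin n)))
    (k : ℕ) (ω : Ω) : ℕ :=
  (Finset.univ.filter (fun i : Fin n => rho n P i ω = k)).card

/-- The coalescent times of Kingman's `n`-coalescent: `T n = 0` a.s. and the rescaled
increments `C(k,2) (T_{k-1} − T_k)`, `2 ≤ k ≤ n`, are independent exponential random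
variables with mean `1`. -/
def IsKingmanTimes (n : ℕ) {Ω : Type*} [MeasurableSpace Ω] (μ : Measure Ω)
    (T : ℕ → Ω → ℝ) : Prop :=
  (∀ k, Measurable (T k)) ∧
  (∀ᵐ ω ∂μ, T n ω = 0) ∧
  iIndepFun
    (fun j : Fin (n - 1) => fun ω =>
      (((j : ℕ) + 2).choose 2 : ℝ) * (T ((j : ℕ) + 1) ω - T ((j : ℕ) + 2) ω)) μ ∧
  ∀ j : Fin (n - 1),
    μ.map (fun ω => (((j : ℕ) + 2).choose 2 : ℝ) * (T ((j : ℕ) + 1) ω - T ((j : ℕ) + 2) ω))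
      = ProbabilityTheory.expMeasure 1

/-- Finite sets carry the discrete measurable structure. -/
instance finsetMeasurableSpace (α : Type*) : MeasurableSpace (Finset α) := ⊤

set_option linter.unusedSectionVars false
set_option linter.unusedVariables false

namespace KAux

variable {n : ℕ}

def mrg (q1 q2 : Finset (Fin n)) (p : Finset (Finset (Fin n))) : Finset (Finset (Fin n)) :=
  insert (q1 ∪ q2) ((p.erase q1).erase q2)

def Good (n k : ℕ) (p : Finset (Finset (Fin n))) : Prop :=
  p.card = k ∧ (∀ b ∈ p, b.Nonempty) ∧
    ∀ b1 ∈ p, ∀ b2 ∈ p, b1 ≠ b2 → Disjoint b1 b2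

lemma two_le_card_union {k} {p : Finset (Finset (Fin n))} (hg : Good n k p)
    {q1 q2 : Finset (Fin n)} (h1 : q1 ∈ p) (h2 : q2 ∈ p) (hne : q1 ≠ q2) :
    2 ≤ (q1 ∪ q2).card := by
  have hd := hg.2.2 q1 h1 q2 h2 hne
  have e1 := (hg.2.1 q1 h1).card_pos
  have e2 := (hg.2.1 q2 h2).card_pos
  rw [Finset.card_union_of_disjoint hd]
  omega

lemma singleton_mem_mrg {k} {p : Finset (Finset (Fin n))} (hg : Good n k p)
    {q1 q2 : Finset (Fin n)} (h1 : q1 ∈ p) (h2 : q2 ∈ p) (hne : q1 ≠ q2) {i : Fin n} :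
    {i} ∈ mrg q1 q2 p ↔ {i} ∈ p ∧ {i} ≠ q1 ∧ {i} ≠ q2 := by
  unfold mrg
  simp only [Finset.mem_insert, Finset.mem_erase]
  constructor
  · rintro (h | ⟨hb, ha, hp⟩)
    · exfalso
      have h2c := two_le_card_union hg h1 h2 hne
      rw [← h] at h2c
      simp at h2c
    · exact ⟨hp, ha, hb⟩
  · rintro ⟨hp, ha, hb⟩
    exact Or.inr ⟨hb, ha, hp⟩

lemma union_not_mem_erase {k} {p : Finset (Finset (Fin n))} (hg : Good n k p)
    {q1 q2 : Finset (Fin n)} (h1 : q1 ∈ p) (h2 : q2 ∈ p) (hne : q1 ≠ q2) :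
    q1 ∪ q2 ∉ (p.erase q1).erase q2 := by
  intro hmem
  have hb2 := Finset.mem_of_mem_erase hmem
  have hb : q1 ∪ q2 ∈ p := Finset.mem_of_mem_erase hb2
  have hne1 : q1 ∪ q2 ≠ q1 := Finset.ne_of_mem_erase hb2
  have hd := hg.2.2 _ hb q1 h1 hne1
  have : q1 ⊆ q1 ∪ q2 := Finset.subset_union_left
  have e1 := hg.2.1 q1 h1
  obtain ⟨x, hx⟩ := e1
  exact (Finset.disjoint_left.1 hd) (this hx) hx

lemma mrg_good {k} {p : Finset (Finset (Fin n))} (hg : Good n k p) (hk : 2 ≤ k)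
    {q1 q2 : Finset (Fin n)} (h1 : q1 ∈ p) (h2 : q2 ∈ p) (hne : q1 ≠ q2) :
    Good n (k-1) (mrg q1 q2 p) := by
  have h2e : q2 ∈ p.erase q1 := Finset.mem_erase.2 ⟨hne.symm, h2⟩
  refine ⟨?_, ?_, ?_⟩
  · rw [mrg, Finset.card_insert_of_notMem (union_not_mem_erase hg h1 h2 hne),
      Finset.card_erase_of_mem h2e, Finset.card_erase_of_mem h1, hg.1]
    omega
  · intro b hb
    rw [mrg, Finset.mem_insert] at hb
    rcases hb with rfl | hb
    · exact (hg.2.1 q1 h1).mono Finset.subset_union_left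
    · exact hg.2.1 b (Finset.mem_of_mem_erase (Finset.mem_of_mem_erase hb))
  · intro b1 hb1 b2 hb2 hbne
    rw [mrg, Finset.mem_insert] at hb1 hb2
    have key : ∀ b ∈ (p.erase q1).erase q2, Disjoint b (q1 ∪ q2) := by
      intro b hb
      have hbq2 : b ≠ q2 := (Finset.mem_erase.1 hb).1
      have hbq1 : b ≠ q1 := (Finset.mem_erase.1 (Finset.mem_of_mem_erase hb)).1
      have hbp : b ∈ p := Finset.mem_of_mem_erase (Finset.mem_of_mem_erase hb)
      exact Finset.disjoint_union_right.2 ⟨hg.2.2 b hbp q1 h1 hbq1, hg.2.2 b hbp q2 h2 hbq2⟩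
    rcases hb1 with rfl | hb1
    · rcases hb2 with rfl | hb2
      · exact absurd rfl hbne
      · exact (key b2 hb2).symm
    · rcases hb2 with rfl | hb2
      · exact key b1 hb1
      · exact hg.2.2 b1 (Finset.mem_of_mem_erase (Finset.mem_of_mem_erase hb1)) b2
          (Finset.mem_of_mem_erase (Finset.mem_of_mem_erase hb2)) hbne

lemma good_singletons : Good n n (Finset.univ.image (fun i : Fin n => ({i} : Finset (Fin n)))) := by
  refine ⟨?_, ?_, ?_⟩
  · rw [Finset.card_image_of_injective _ (fun a b h => by simpa using h), Finset.card_univ,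
      Fintype.card_fin]
  · intro b hb
    simp only [Finset.mem_image] at hb
    obtain ⟨j, _, rfl⟩ := hb
    exact ⟨j, Finset.mem_singleton_self j⟩
  · intro b1 hb1 b2 hb2 hne
    simp only [Finset.mem_image] at hb1 hb2
    obtain ⟨j1, _, rfl⟩ := hb1
    obtain ⟨j2, _, rfl⟩ := hb2
    simp only [Finset.disjoint_singleton_right, Finset.mem_singleton]
    intro h; exact hne (by rw [h])


open Classical in
lemma count_sum {k : ℕ} {p : Finset (Finset (Fin n))} (hg : Good n k p) (hk : 2 ≤ k)
    {i : Fin n} (hi : {i} ∈ p) :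
    ∑ p' ∈ Finset.univ.filter (fun p' : Finset (Finset (Fin n)) => {i} ∈ p'),
      Nat.card {q : Finset (Fin n) × Finset (Fin n) //
        q.1 ∈ p ∧ q.2 ∈ p ∧ q.1 ≠ q.2 ∧
        p' = insert (q.1 ∪ q.2) ((p.erase q.1).erase q.2)}
      = (k-1) * (k-2) := by
  classical
  set e := p.erase {i} with he
  set s : Finset (Finset (Fin n) × Finset (Fin n)) :=
    Finset.univ.filter (fun q => q.1 ∈ p ∧ q.2 ∈ p ∧ q.1 ≠ q.2 ∧ {i} ∈ mrg q.1 q.2 p) with hs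
  have hcard : ∀ p' : Finset (Finset (Fin n)), {i} ∈ p' →
      Nat.card {q : Finset (Fin n) × Finset (Fin n) //
        q.1 ∈ p ∧ q.2 ∈ p ∧ q.1 ≠ q.2 ∧
        p' = insert (q.1 ∪ q.2) ((p.erase q.1).erase q.2)}
      = (s.filter (fun q => mrg q.1 q.2 p = p')).card := by
    intro p' hp'
    rw [Nat.card_eq_fintype_card, Fintype.card_subtype]
    congr 1
    ext q
    simp only [hs, Finset.mem_filter, Finset.mem_univ, true_and]
    simp only [mrg]
    constructor
    · rintro ⟨ha, hb, hc, hd⟩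
      exact ⟨⟨ha, hb, hc, hd ▸ hp'⟩, hd.symm⟩
    · rintro ⟨⟨ha, hb, hc, _⟩, hd⟩
      exact ⟨ha, hb, hc, hd.symm⟩
  rw [Finset.sum_congr rfl (fun p' hp' => hcard p' (Finset.mem_filter.1 hp').2)]
  have hfib : s.card = ∑ p' ∈ Finset.univ.filter (fun p' : Finset (Finset (Fin n)) => {i} ∈ p'),
      (s.filter (fun q => mrg q.1 q.2 p = p')).card :=
    Finset.card_eq_sum_card_fiberwise (fun q hq => by
      simp only [hs, Finset.mem_filter, Finset.mem_univ, true_and] at hq ⊢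
      exact Finset.mem_coe.2 (Finset.mem_filter.2 ⟨Finset.mem_univ _, (Finset.mem_filter.1 hq).2.2.2.2⟩))
  rw [← hfib]
  -- now compute s.card
  have hseq : s = (e ×ˢ e).filter (fun q => q.1 ≠ q.2) := by
    ext ⟨q1, q2⟩
    simp only [hs, he, Finset.mem_filter, Finset.mem_univ, true_and, Finset.mem_product,
      Finset.mem_erase]
    constructor
    · rintro ⟨h1, h2, hne, hm⟩
      rw [singleton_mem_mrg hg h1 h2 hne] at hm
      exact ⟨⟨⟨fun h => hm.2.1 h.symm, h1⟩, fun h => hm.2.2 h.symm, h2⟩, hne⟩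
    · rintro ⟨⟨⟨hq1i, h1⟩, hq2i, h2⟩, hne⟩
      refine ⟨h1, h2, hne, ?_⟩
      rw [singleton_mem_mrg hg h1 h2 hne]
      exact ⟨hi, fun h => hq1i h.symm, fun h => hq2i h.symm⟩
  have hecard : e.card = k - 1 := by rw [he, Finset.card_erase_of_mem hi, hg.1]
  have hdiag : ((e ×ˢ e).filter (fun q => q.1 = q.2)).card = e.card := by
    have : (e ×ˢ e).filter (fun q : Finset (Fin n) × Finset (Fin n) => q.1 = q.2)
        = e.image (fun a => (a, a)) := by
      ext ⟨a, b⟩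
      simp only [Finset.mem_filter, Finset.mem_product, Finset.mem_image]
      constructor
      · rintro ⟨⟨ha, hb⟩, h⟩; exact ⟨a, ha, by simp [h]⟩
      · rintro ⟨c, hc, hcc⟩
        obtain ⟨rfl, rfl⟩ : c = a ∧ c = b := by
          constructor <;> [exact congrArg Prod.fst hcc; exact congrArg Prod.snd hcc]
        exact ⟨⟨hc, hc⟩, rfl⟩
    rw [this, Finset.card_image_of_injective _ (fun a b h => congrArg Prod.fst h)]
  have htot := Finset.card_filter_add_card_filter_not
    (s := e ×ˢ e) (fun q : Finset (Fin n) × Finset (Fin n) => q.1 = q.2)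
  rw [hseq]
  have hprod : (e ×ˢ e).card = (k-1) * (k-1) := by rw [Finset.card_product, hecard]
  have harith : (k-1) * (k-1) - (k-1) = (k-1) * (k-2) := by
    obtain ⟨a, rfl⟩ : ∃ a, k = a + 2 := ⟨k - 2, by omega⟩
    have h1 : a + 2 - 1 = a + 1 := by omega
    have h2 : a + 2 - 2 = a := by omega
    rw [h1, h2]
    have : (a+1) * (a+1) = (a+1) * a + (a+1) := by ring
    omega
  have hne' : Finset.filter (fun q : Finset (Fin n) × Finset (Fin n) => q.1 ≠ q.2) (e ×ˢ e)
      = Finset.filter (fun a : Finset (Fin n) × Finset (Fin n) => ¬ a.1 = a.2) (e ×ˢ e) := by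
    ext q; simp [Ne]
  rw [hne']
  omega

open Classical in
lemma count_zero {k : ℕ} {p : Finset (Finset (Fin n))} (hg : Good n k p)
    {i : Fin n} (hi : {i} ∉ p) (p' : Finset (Finset (Fin n))) (hp' : {i} ∈ p') :
    Nat.card {q : Finset (Fin n) × Finset (Fin n) //
        q.1 ∈ p ∧ q.2 ∈ p ∧ q.1 ≠ q.2 ∧
        p' = insert (q.1 ∪ q.2) ((p.erase q.1).erase q.2)} = 0 := by
  rw [Nat.card_eq_zero]
  left
  constructor
  rintro ⟨⟨q1, q2⟩, h1, h2, hne, heq⟩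
  have : {i} ∈ mrg q1 q2 p := by rw [mrg, ← heq]; exact hp'
  rw [singleton_mem_mrg hg h1 h2 hne] at this
  exact hi this.1


abbrev Hist (n k : ℕ) := { j // j ∈ Finset.Icc k n } → Finset (Finset (Fin n))

def extH (k : ℕ) (f : Hist n k) : ℕ → Finset (Finset (Fin n)) :=
  fun j => if h : j ∈ Finset.Icc k n then f ⟨j, h⟩ else ∅

variable {Ω : Type*} [MeasurableSpace Ω] {μ : Measure Ω}
  {P : ℕ → Ω → Finset (Finset (Fin n))} {k : ℕ}

def cyl (P : ℕ → Ω → Finset (Finset (Fin n))) (k : ℕ) (f : Hist n k) : Set Ω :=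
  {ω | ∀ j, k ≤ j → j ≤ n → P j ω = extH k f j}

lemma measurable_P (hP : IsKingmanPartition n μ P) (k : ℕ) : Measurable (P k) := by
  apply measurable_to_countable
  intro y
  exact hP.1 k (P k y)

lemma cyl_meas (hP : IsKingmanPartition n μ P) (k : ℕ) (f : Hist n k) :
    MeasurableSet (cyl P k f) := by
  have : cyl P k f = ⋂ j ∈ Finset.Icc k n, {ω | P j ω = extH k f j} := by
    ext ω
    simp only [cyl, Set.mem_iInter, Set.mem_setOf_eq, Finset.mem_Icc]
    constructor
    · intro h j hj; exact h j hj.1 hj.2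
    · intro h j h1 h2; exact h j ⟨h1, h2⟩
  rw [this]
  exact (Finset.Icc k n).measurableSet_biInter (fun j _ => hP.1 j _)

lemma mem_cyl_eq {k : ℕ} {f : Hist n k} {ω : Ω} (hω : ω ∈ cyl P k f)
    {j : ℕ} (h1 : k ≤ j) (h2 : j ≤ n) : P j ω = extH k f j := hω j h1 h2

lemma extH_eq {k j : ℕ} (f : Hist n k) (h : j ∈ Finset.Icc k n) :
    extH k f j = f ⟨j, h⟩ := dif_pos h

lemma cyl_disjoint (hkn : k ≤ n) :
    Pairwise (Function.onFun Disjoint (cyl P k)) := by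
  intro f g hfg
  rw [Function.onFun, Set.disjoint_left]
  intro ω hf hg
  apply hfg
  funext j
  have hj := Finset.mem_Icc.1 j.2
  have h1 := mem_cyl_eq hf hj.1 hj.2
  have h2 := mem_cyl_eq hg hj.1 hj.2
  rw [extH_eq f j.2] at h1
  rw [extH_eq g j.2] at h2
  rw [← Subtype.coe_eta j j.2, ← h1, ← h2]

lemma cyl_cover (A : Set Ω) : A = ⋃ f : Hist n k, A ∩ cyl P k f := by
  ext ω
  simp only [Set.mem_iUnion, Set.mem_inter_iff]
  constructor
  · intro h
    refine ⟨fun j => P j.1 ω, h, ?_⟩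
    intro j h1 h2
    rw [extH, dif_pos (Finset.mem_Icc.2 ⟨h1, h2⟩)]
  · rintro ⟨f, h, _⟩; exact h

lemma decomp [IsFiniteMeasure μ] (hP : IsKingmanPartition n μ P) (hkn : k ≤ n)
    (A : Set Ω) (hA : MeasurableSet A) :
    (μ A).toReal = ∑ f : Hist n k, (μ (A ∩ cyl P k f)).toReal := by
  have h1 : μ A = ∑ f : Hist n k, μ (A ∩ cyl P k f) := by
    rw [show μ A = μ (⋃ f : Hist n k, A ∩ cyl P k f) from by rw [← cyl_cover]]
    rw [measure_iUnion ?_ (fun f => hA.inter (cyl_meas hP k f)), tsum_fintype]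
    exact fun f g hfg => ((cyl_disjoint hkn hfg).inf_left' A).inf_right' A
  rw [h1, ENNReal.toReal_sum (fun f _ => measure_ne_top μ _)]

lemma step_law (hP : IsKingmanPartition n μ P) (hk2 : 2 ≤ k) (hkn : k ≤ n)
    (f : Hist n k) (p' : Finset (Finset (Fin n))) :
    (μ (cyl P k f ∩ {ω | P (k-1) ω = p'})).toReal
      = (μ (cyl P k f)).toReal * mergeProb n k (extH k f k) p' :=
  hP.2.2 k hk2 hkn (extH k f) p'

lemma as_step [IsFiniteMeasure μ] (hP : IsKingmanPartition n μ P) (hk2 : 2 ≤ k) (hkn : k ≤ n) :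
    ∀ᵐ ω ∂μ, ∃ q1, q1 ∈ P k ω ∧ ∃ q2, q2 ∈ P k ω ∧ q1 ≠ q2 ∧
      P (k-1) ω = mrg q1 q2 (P k ω) := by
  rw [ae_iff]
  set Bad : Set Ω := {ω | ¬ ∃ q1, q1 ∈ P k ω ∧ ∃ q2, q2 ∈ P k ω ∧ q1 ≠ q2 ∧
      P (k-1) ω = mrg q1 q2 (P k ω)} with hBad
  have hsub : Bad ⊆ ⋃ (f : Hist n k) (p' : Finset (Finset (Fin n)))
      (_ : ¬ ∃ q1, q1 ∈ extH k f k ∧ ∃ q2, q2 ∈ extH k f k ∧ q1 ≠ q2 ∧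
        p' = mrg q1 q2 (extH k f k)),
      (cyl P k f ∩ {ω | P (k-1) ω = p'}) := by
    intro ω hω
    simp only [Set.mem_iUnion]
    refine ⟨fun j => P j.1 ω, P (k-1) ω, ?_, ?_, rfl⟩
    · have hk' : P k ω = extH k (fun j => P j.1 ω) k := by
        rw [extH, dif_pos (Finset.mem_Icc.2 ⟨le_refl k, hkn⟩)]
      rw [← hk']
      exact hω
    · intro j h1 h2
      rw [extH, dif_pos (Finset.mem_Icc.2 ⟨h1, h2⟩)]
  refine measure_mono_null hsub ?_
  refine measure_iUnion_null fun f => measure_iUnion_null fun p' => measure_iUnion_null fun hbad => ?_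
  have h := step_law hP hk2 hkn f p'
  have hzero : mergeProb n k (extH k f k) p' = 0 := by
    unfold mergeProb
    have hempty : IsEmpty {q : Finset (Fin n) × Finset (Fin n) //
        q.1 ∈ extH k f k ∧ q.2 ∈ extH k f k ∧ q.1 ≠ q.2 ∧
        p' = insert (q.1 ∪ q.2) (((extH k f k).erase q.1).erase q.2)} := by
      constructor
      rintro ⟨⟨q1, q2⟩, h1, h2, hne, heq⟩
      exact hbad ⟨q1, h1, q2, h2, hne, heq⟩
    rw [Nat.card_of_isEmpty]
    simp
  rw [hzero, mul_zero] at h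
  have := measure_ne_top μ (cyl P k f ∩ {ω | P (k-1) ω = p'})
  rw [ENNReal.toReal_eq_zero_iff] at h
  tauto


-- NEW MATERIAL BELOW

lemma as_good [IsProbabilityMeasure μ] (hP : IsKingmanPartition n μ P) :
    ∀ k, 1 ≤ k → k ≤ n → ∀ᵐ ω ∂μ, Good n k (P k ω) := by
  have key : ∀ d : ℕ, d ≤ n - 1 → ∀ᵐ ω ∂μ, Good n (n - d) (P (n - d) ω) := by
    intro d
    induction d with
    | zero =>
      intro _
      filter_upwards [hP.2.1] with ω hω
      rw [Nat.sub_zero, hω]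
      exact good_singletons
    | succ d ih =>
      intro hd
      have hk2 : 2 ≤ n - d := by omega
      have hkn : n - d ≤ n := by omega
      filter_upwards [ih (by omega), as_step hP hk2 hkn] with ω h1 h2
      obtain ⟨q1, hq1, q2, hq2, hne, heq⟩ := h2
      have hnd : n - (d+1) = (n - d) - 1 := by omega
      rw [hnd, heq]
      exact mrg_good h1 hk2 hq1 hq2 hne
  intro k h1 h2
  have := key (n - k) (by omega)
  rwa [show n - (n - k) = k from by omega] at this

lemma as_mono [IsProbabilityMeasure μ] (hP : IsKingmanPartition n μ P) :
    ∀ᵐ ω ∂μ, ∀ k, 2 ≤ k → k ≤ n → ∀ i : Fin n, {i} ∈ P (k-1) ω → {i} ∈ P k ω := by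
  rw [ae_all_iff]
  intro k
  by_cases hk : 2 ≤ k ∧ k ≤ n
  · filter_upwards [as_good hP k (by omega) hk.2, as_step hP hk.1 hk.2] with ω hg hs _ _ i hmem
    obtain ⟨q1, hq1, q2, hq2, hne, heq⟩ := hs
    rw [heq, singleton_mem_mrg hg hq1 hq2 hne] at hmem
    exact hmem.1
  · filter_upwards with ω h1 h2
    exact absurd ⟨h1, h2⟩ hk

lemma as_mono' [IsProbabilityMeasure μ] (hP : IsKingmanPartition n μ P) :
    ∀ᵐ ω ∂μ, ∀ (i : Fin n) (m j : ℕ), 1 ≤ m → m ≤ j → j ≤ n →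
      {i} ∈ P m ω → {i} ∈ P j ω := by
  filter_upwards [as_mono hP] with ω h
  intro i m j h1 h2 h3 hmem
  induction j, h2 using Nat.le_induction with
  | base => exact hmem
  | succ j hj ih =>
    have := h (j+1) (by omega) h3 i
    rw [Nat.add_sub_cancel] at this
    exact this (ih (by omega))

lemma as_rho [IsProbabilityMeasure μ] (hP : IsKingmanPartition n μ P) :
    ∀ᵐ ω ∂μ, ∀ (i : Fin n) (m : ℕ), 1 ≤ m → m ≤ n →
      (rho n P i ω < m ↔ {i} ∈ P m ω) := by
  filter_upwards [as_mono' hP] with ω hmono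
  intro i m h1 h2
  constructor
  · intro hlt
    by_contra hmem
    have hm : m ∈ {k | 1 ≤ k ∧ k ≤ n ∧ {i} ∉ P k ω} := ⟨h1, h2, hmem⟩
    have hbdd : BddAbove {k | 1 ≤ k ∧ k ≤ n ∧ ({i} : Finset (Fin n)) ∉ P k ω} :=
      ⟨n, fun x hx => hx.2.1⟩
    have := le_csSup hbdd hm
    rw [rho] at hlt
    omega
  · intro hmem
    have hsub : ∀ x ∈ {k | 1 ≤ k ∧ k ≤ n ∧ ({i} : Finset (Fin n)) ∉ P k ω}, x ≤ m - 1 := by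
      intro x hx
      by_contra hxm
      push_neg at hxm
      exact hx.2.2 (hmono i m x h1 (by omega) hx.2.1 hmem)
    rw [rho]
    rcases Set.eq_empty_or_nonempty {k | 1 ≤ k ∧ k ≤ n ∧ ({i} : Finset (Fin n)) ∉ P k ω} with h | h
    · rw [h, csSup_empty]
      simpa using (show 0 < m by omega)
    · have := csSup_le h hsub
      omega

lemma mem_A_meas (hP : IsKingmanPartition n μ P) (m : ℕ) (i : Fin n) :
    MeasurableSet {ω | ({i} : Finset (Fin n)) ∈ P m ω} :=
  measurable_P hP m (MeasurableSpace.measurableSet_top (s := {p | ({i} : Finset (Fin n)) ∈ p}))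

lemma recur [IsProbabilityMeasure μ] (hP : IsKingmanPartition n μ P)
    (hk2 : 2 ≤ k) (hkn : k ≤ n) (i : Fin n) :
    (μ {ω | ({i} : Finset (Fin n)) ∈ P (k-1) ω}).toReal
      = (((k:ℝ)-2)/(k:ℝ)) * (μ {ω | ({i} : Finset (Fin n)) ∈ P k ω}).toReal := by
  set t : Finset (Finset (Finset (Fin n))) :=
    Finset.univ.filter (fun p' => ({i} : Finset (Fin n)) ∈ p') with ht
  have hA1 : {ω | ({i} : Finset (Fin n)) ∈ P (k-1) ω} = ⋃ p' ∈ t, {ω | P (k-1) ω = p'} := by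
    ext ω
    simp only [Set.mem_setOf_eq, Set.mem_iUnion, ht, Finset.mem_filter, Finset.mem_univ, true_and]
    constructor
    · intro h; exact ⟨P (k-1) ω, h, rfl⟩
    · rintro ⟨p', hp', heq⟩; rw [heq]; exact hp'
  have h1 : (μ {ω | ({i} : Finset (Fin n)) ∈ P (k-1) ω}).toReal
      = ∑ p' ∈ t, (μ {ω | P (k-1) ω = p'}).toReal := by
    rw [hA1, measure_biUnion_finset ?_ (fun p' _ => hP.1 (k-1) p'),
      ENNReal.toReal_sum (fun p' _ => measure_ne_top μ _)]
    intro p1 _ p2 _ hne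
    rw [Function.onFun, Set.disjoint_left]
    intro ω hω1 hω2
    exact hne (by rw [← hω1, ← hω2])
  have h2 : ∀ p' : Finset (Finset (Fin n)), (μ {ω | P (k-1) ω = p'}).toReal
      = ∑ f : Hist n k, (μ (cyl P k f)).toReal * mergeProb n k (extH k f k) p' := by
    intro p'
    rw [decomp hP hkn _ (hP.1 (k-1) p')]
    refine Finset.sum_congr rfl (fun f _ => ?_)
    rw [Set.inter_comm, step_law hP hk2 hkn f p']
  have h3 : ∀ f : Hist n k,
      ∑ p' ∈ t, (μ (cyl P k f)).toReal * mergeProb n k (extH k f k) p'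
      = (((k:ℝ)-2)/(k:ℝ)) *
        (if ({i} : Finset (Fin n)) ∈ extH k f k then (μ (cyl P k f)).toReal else 0) := by
    intro f
    by_cases hμ0 : μ (cyl P k f) = 0
    · rw [hμ0]
      simp
    · have hgood : Good n k (extH k f k) := by
        by_contra hng
        apply hμ0
        refine measure_mono_null (fun ω hω => ?_) (ae_iff.1 (as_good hP k (by omega) hkn))
        simp only [Set.mem_setOf_eq]
        rw [mem_cyl_eq hω (le_refl k) hkn]
        exact hng
      rw [← Finset.mul_sum]
      by_cases hmem : ({i} : Finset (Fin n)) ∈ extH k f k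
      · rw [if_pos hmem]
        have hsum : ∑ p' ∈ t, mergeProb n k (extH k f k) p' = ((k:ℝ)-2)/(k:ℝ) := by
          unfold mergeProb
          rw [← Finset.sum_div, ht, ← Nat.cast_sum, count_sum hgood hk2 hmem]
          have hk0 : (k:ℝ) ≠ 0 := by
            have : (2:ℝ) ≤ (k:ℝ) := by exact_mod_cast hk2
            linarith
          have hk1 : (k:ℝ) - 1 ≠ 0 := by
            have : (2:ℝ) ≤ (k:ℝ) := by exact_mod_cast hk2
            linarith
          push_cast [Nat.cast_sub (show 1 ≤ k by omega), Nat.cast_sub (show 2 ≤ k by omega)]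
          field_simp
        rw [hsum]
        ring
      · rw [if_neg hmem, mul_zero]
        have hsum : ∑ p' ∈ t, mergeProb n k (extH k f k) p' = 0 := by
          apply Finset.sum_eq_zero
          intro p' hp'
          unfold mergeProb
          rw [count_zero hgood hmem p' ((Finset.mem_filter.1 hp').2)]
          simp
        rw [hsum, mul_zero]
  rw [h1]
  rw [Finset.sum_congr rfl (fun p' _ => h2 p'), Finset.sum_comm,
    Finset.sum_congr rfl (fun f _ => h3 f), ← Finset.mul_sum]
  congr 1
  rw [decomp hP hkn _ (mem_A_meas hP k i)]
  refine Finset.sum_congr rfl (fun f _ => ?_)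
  by_cases hmem : ({i} : Finset (Fin n)) ∈ extH k f k
  · have hss : {ω | ({i} : Finset (Fin n)) ∈ P k ω} ∩ cyl P k f = cyl P k f :=
      Set.inter_eq_self_of_subset_right (fun ω hω => by
        simp only [Set.mem_setOf_eq]
        rw [mem_cyl_eq hω (le_refl k) hkn]
        exact hmem)
    rw [if_pos hmem, hss]
  · rw [if_neg hmem]
    have : {ω | ({i} : Finset (Fin n)) ∈ P k ω} ∩ cyl P k f = ∅ := by
      ext ω
      simp only [Set.mem_inter_iff, Set.mem_setOf_eq, Set.mem_empty_iff_false, iff_false, not_and]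
      intro hA hc
      rw [mem_cyl_eq hc (le_refl k) hkn] at hA
      exact hmem hA
    rw [this]
    simp

lemma prob_top [IsProbabilityMeasure μ] (hP : IsKingmanPartition n μ P) (i : Fin n) :
    μ {ω | ({i} : Finset (Fin n)) ∈ P n ω} = 1 := by
  rw [← prob_compl_eq_zero_iff (mem_A_meas hP n i)]
  apply measure_mono_null ?_ (ae_iff.1 hP.2.1)
  intro ω hω
  simp only [Set.mem_compl_iff, Set.mem_setOf_eq] at hω ⊢
  intro heq
  apply hω
  rw [heq]
  exact Finset.mem_image_of_mem _ (Finset.mem_univ i)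

lemma prob_formula [IsProbabilityMeasure μ] (hP : IsKingmanPartition n μ P)
    (hn2 : 2 ≤ n) (i : Fin n) :
    ∀ m, 1 ≤ m → m ≤ n →
      (μ {ω | ({i} : Finset (Fin n)) ∈ P m ω}).toReal
        = (m:ℝ) * ((m:ℝ)-1) / ((n:ℝ) * ((n:ℝ)-1)) := by
  have hn0 : (n:ℝ) ≠ 0 := by
    have : (2:ℝ) ≤ (n:ℝ) := by exact_mod_cast hn2
    linarith
  have hn1 : (n:ℝ) - 1 ≠ 0 := by
    have : (2:ℝ) ≤ (n:ℝ) := by exact_mod_cast hn2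
    linarith
  have key : ∀ d, d ≤ n - 1 →
      (μ {ω | ({i} : Finset (Fin n)) ∈ P (n-d) ω}).toReal
        = ((n-d : ℕ):ℝ) * (((n-d : ℕ):ℝ)-1) / ((n:ℝ) * ((n:ℝ)-1)) := by
    intro d
    induction d with
    | zero =>
      intro _
      rw [Nat.sub_zero, prob_top hP i, ENNReal.toReal_one]
      field_simp
    | succ d ih =>
      intro hd
      have hk2 : 2 ≤ n - d := by omega
      have hkn : n - d ≤ n := by omega
      have heq : n - (d+1) = (n - d) - 1 := by omega
      rw [heq, recur hP hk2 hkn i, ih (by omega)]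
      have hc1 : ((n - d : ℕ):ℝ) = (n:ℝ) - (d:ℝ) := by
        rw [Nat.cast_sub (by omega : d ≤ n)]
      have hc2 : ((n - d - 1 : ℕ):ℝ) = (n:ℝ) - (d:ℝ) - 1 := by
        rw [show n - d - 1 = n - (d+1) from by omega, Nat.cast_sub (by omega : d + 1 ≤ n)]
        push_cast
        ring
      rw [hc1, hc2]
      have hx0 : ((n:ℝ) - (d:ℝ)) ≠ 0 := by
        have : (2:ℝ) ≤ (n:ℝ) - (d:ℝ) := by
          rw [← hc1]
          exact_mod_cast hk2
        linarith
      field_simp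
      ring
  intro m h1 h2
  have := key (n - m) (by omega)
  rwa [show n - (n - m) = m from by omega] at this


lemma main_bound [IsProbabilityMeasure μ] (hP : IsKingmanPartition n μ P)
    (hn2 : 2 ≤ n) {m : ℕ} (hm1 : 1 ≤ m) (hmn : m ≤ n)
    (S : Set Ω) (hS : ∀ ω, (∀ i : Fin n, ¬ (rho n P i ω < m)) → ω ∈ S) :
    1 - (n:ℝ) * ((m:ℝ) * ((m:ℝ)-1) / ((n:ℝ) * ((n:ℝ)-1))) ≤ (μ S).toReal := by
  set q : ℝ := (m:ℝ) * ((m:ℝ)-1) / ((n:ℝ) * ((n:ℝ)-1)) with hq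
  have hper : ∀ i : Fin n, (μ {ω | rho n P i ω < m}).toReal ≤ q := by
    intro i
    set bad : Set Ω := {ω | ¬ ∀ (i : Fin n) (m : ℕ), 1 ≤ m → m ≤ n →
      (rho n P i ω < m ↔ {i} ∈ P m ω)} with hbad
    have hnull : μ bad = 0 := ae_iff.1 (as_rho hP)
    have hsub : {ω | rho n P i ω < m} ⊆ {ω | ({i} : Finset (Fin n)) ∈ P m ω} ∪ bad := by
      intro ω hω
      by_cases hgood : ∀ (i : Fin n) (m : ℕ), 1 ≤ m → m ≤ n →
          (rho n P i ω < m ↔ {i} ∈ P m ω)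
      · left
        exact (hgood i m hm1 hmn).1 hω
      · right
        exact hgood
    calc (μ {ω | rho n P i ω < m}).toReal
        ≤ (μ ({ω | ({i} : Finset (Fin n)) ∈ P m ω} ∪ bad)).toReal :=
          ENNReal.toReal_mono (measure_ne_top μ _) (measure_mono hsub)
      _ ≤ (μ {ω | ({i} : Finset (Fin n)) ∈ P m ω} + μ bad).toReal :=
          ENNReal.toReal_mono (by
            rw [hnull, add_zero]; exact measure_ne_top μ _) (measure_union_le _ _)
      _ = (μ {ω | ({i} : Finset (Fin n)) ∈ P m ω}).toReal := by rw [hnull, add_zero]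
      _ = q := prob_formula hP hn2 i m hm1 hmn
  set N : Set Ω := {ω | ∀ i : Fin n, ¬ (rho n P i ω < m)} with hN
  have hcompl : (μ Nᶜ).toReal ≤ (n:ℝ) * q := by
    have hsub : Nᶜ ⊆ ⋃ i : Fin n, {ω | rho n P i ω < m} := by
      intro ω hω
      simp only [hN, Set.mem_compl_iff, Set.mem_setOf_eq, not_forall, not_not] at hω
      obtain ⟨i, hi⟩ := hω
      exact Set.mem_iUnion.2 ⟨i, hi⟩
    have h1 : μ Nᶜ ≤ ∑ i : Fin n, μ {ω | rho n P i ω < m} := by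
      refine (measure_mono hsub).trans ?_
      refine (measure_iUnion_le _).trans ?_
      rw [tsum_fintype]
    have h2 : (μ Nᶜ).toReal ≤ ∑ i : Fin n, (μ {ω | rho n P i ω < m}).toReal := by
      rw [← ENNReal.toReal_sum (fun i _ => measure_ne_top μ _)]
      exact ENNReal.toReal_mono (by
        exact (ENNReal.sum_lt_top.2 (fun i _ => measure_lt_top μ _)).ne) h1
    refine h2.trans ?_
    calc ∑ i : Fin n, (μ {ω | rho n P i ω < m}).toReal
        ≤ ∑ _i : Fin n, q := Finset.sum_le_sum (fun i _ => hper i)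
      _ = (n:ℝ) * q := by rw [Finset.sum_const, Finset.card_univ, Fintype.card_fin, nsmul_eq_mul]
  have hNge : 1 ≤ (μ N).toReal + (μ Nᶜ).toReal := by
    have h1 : (1 : ENNReal) = μ Set.univ := (measure_univ).symm
    have h2 : μ Set.univ ≤ μ N + μ Nᶜ := by
      rw [show (Set.univ : Set Ω) = N ∪ Nᶜ from (Set.union_compl_self N).symm]
      exact measure_union_le _ _
    have h3 : (μ Set.univ).toReal ≤ (μ N + μ Nᶜ).toReal :=
      ENNReal.toReal_mono (by
        exact (ENNReal.add_lt_top.2 ⟨measure_lt_top μ _, measure_lt_top μ _⟩).ne) h2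
    rw [← h1, ENNReal.toReal_one, ENNReal.toReal_add (measure_ne_top μ _) (measure_ne_top μ _)] at h3
    exact h3
  have hNS : (μ N).toReal ≤ (μ S).toReal :=
    ENNReal.toReal_mono (measure_ne_top μ _) (measure_mono (fun ω hω => hS ω hω))
  linarith


end KAux

open Classical in
/-- For `0 ≤ α < β < 1/2`, `P(L_n^{α,β} = 0) → 1` as `n → ∞`, where
`L_n^{α,β} = Σ_{i : n^α ≤ ρ(i) < n^β} T_{ρ(i)}`. -/
theorem partial_external_length_vanishes {Ω : ℕ → Type*} [∀ n, MeasurableSpace (Ω n)]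
    (μ : ∀ n, Measure (Ω n)) [∀ n, IsProbabilityMeasure (μ n)]
    (P : ∀ n, ℕ → Ω n → Finset (Finset (Fin n)))
    (hP : ∀ n, IsKingmanPartition n (μ n) (P n))
    (T : ∀ n, ℕ → Ω n → ℝ) (hT : ∀ n, IsKingmanTimes n (μ n) (T n))
    (hInd : ∀ n, IndepFun (fun ω (k : ℕ) => T n k ω) (fun ω (k : ℕ) => P n k ω) (μ n))
    (α β : ℝ) (hα : 0 ≤ α) (hαβ : α < β) (hβ : β < 1 / 2) :
    Filter.Tendsto
      (fun n => (μ n {ω | (∑ i : Fin n,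
          if (n : ℝ) ^ α ≤ (rho n (P n) i ω : ℝ) ∧ (rho n (P n) i ω : ℝ) < (n : ℝ) ^ β
          then T n (rho n (P n) i ω) ω else 0) = 0}).toReal)
      Filter.atTop (nhds 1) := by
  have hβ0 : 0 < β := lt_of_le_of_lt hα hαβ
  have hβ1 : β < 1 := by linarith
  set c : ℕ → ℝ := fun n => 8 * (n:ℝ) ^ (2*β - 1) with hc
  have hc0 : Filter.Tendsto c Filter.atTop (nhds 0) := by
    have h1 : Filter.Tendsto (fun x : ℝ => x ^ (2*β - 1)) Filter.atTop (nhds 0) := by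
      have := tendsto_rpow_neg_atTop (y := 1 - 2*β) (by linarith)
      convert this using 2 with x
      ring_nf
    have h2 : Filter.Tendsto (fun n : ℕ => ((n:ℝ)) ^ (2*β - 1)) Filter.atTop (nhds 0) :=
      h1.comp tendsto_natCast_atTop_atTop
    have := h2.const_mul (8:ℝ)
    simpa using this
  refine tendsto_of_tendsto_of_tendsto_of_le_of_le'
    (g := fun n => 1 - c n) (h := fun _ => (1:ℝ)) ?_ tendsto_const_nhds ?_ ?_
  · have := (tendsto_const_nhds (x := (1:ℝ)) (f := Filter.atTop (α := ℕ))).sub hc0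
    simpa using this
  · -- eventual lower bound
    filter_upwards [Filter.eventually_ge_atTop 2] with n hn2
    set m : ℕ := ⌈(n:ℝ) ^ β⌉₊ with hm
    have hnR : (2:ℝ) ≤ (n:ℝ) := by exact_mod_cast hn2
    have hn0 : (0:ℝ) < (n:ℝ) := by linarith
    have hn1R : (1:ℝ) ≤ (n:ℝ) := by linarith
    have hm1 : 1 ≤ m := Nat.one_le_ceil_iff.2 (Real.rpow_pos_of_pos hn0 β)
    have hmn : m ≤ n := by
      have h1 : (n:ℝ) ^ β ≤ (n:ℝ) := by
        have := Real.rpow_le_rpow_of_exponent_le hn1R (le_of_lt hβ1)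
        rwa [Real.rpow_one] at this
      calc m ≤ ⌈(n:ℝ)⌉₊ := Nat.ceil_le_ceil h1
        _ = n := Nat.ceil_natCast n
    have hkey := KAux.main_bound (hP n) hn2 hm1 hmn
      {ω | (∑ i : Fin n,
          if (n : ℝ) ^ α ≤ (rho n (P n) i ω : ℝ) ∧ (rho n (P n) i ω : ℝ) < (n : ℝ) ^ β
          then T n (rho n (P n) i ω) ω else 0) = 0}
      (fun ω hω => by
        simp only [Set.mem_setOf_eq]
        apply Finset.sum_eq_zero
        intro i _
        rw [if_neg]
        rintro ⟨h1, h2⟩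
        apply hω i
        have : ((rho n (P n) i ω : ℝ)) < (m:ℝ) := lt_of_lt_of_le h2 (Nat.le_ceil _)
        exact_mod_cast this)
    refine le_trans ?_ hkey
    -- 1 - c n ≤ 1 - n * q
    have hnum : (n:ℝ) * ((m:ℝ) * ((m:ℝ)-1) / ((n:ℝ) * ((n:ℝ)-1))) ≤ c n := by
      set y : ℝ := (n:ℝ) ^ β with hy
      have hy1 : (1:ℝ) ≤ y := by
        rw [hy]
        calc (1:ℝ) = (n:ℝ) ^ (0:ℝ) := by rw [Real.rpow_zero]
          _ ≤ (n:ℝ) ^ β := Real.rpow_le_rpow_of_exponent_le hn1R (le_of_lt hβ0)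
      have hmy : (m:ℝ) ≤ 2 * y := by
        have := Nat.ceil_lt_add_one (le_of_lt (Real.rpow_pos_of_pos hn0 β))
        have h2 : (m:ℝ) < y + 1 := by rw [hm]; exact this
        linarith
      have hy2 : (n:ℝ) ^ (2*β) = y * y := by
        rw [two_mul, Real.rpow_add hn0]
      have hcn : c n = 8 * ((n:ℝ) ^ (2*β) / (n:ℝ)) := by
        simp only [hc]
        rw [Real.rpow_sub hn0, Real.rpow_one]
      rw [hcn, hy2]
      have hN1 : (1:ℝ) ≤ (n:ℝ) - 1 := by linarith
      have hm0 : (0:ℝ) ≤ (m:ℝ) := Nat.cast_nonneg m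
      have hstep1 : (n:ℝ) * ((m:ℝ) * ((m:ℝ)-1) / ((n:ℝ) * ((n:ℝ)-1)))
          = (m:ℝ) * ((m:ℝ)-1) / ((n:ℝ)-1) := by
        field_simp
      rw [hstep1]
      have h8 : (8:ℝ) * (y * y / (n:ℝ)) = 8 * (y * y) / (n:ℝ) := by ring
      rw [h8, div_le_div_iff₀ (by linarith) hn0]
      have hmm : (m:ℝ) * ((m:ℝ) - 1) ≤ 4 * (y * y) := by nlinarith
      have key1 : (m:ℝ) * ((m:ℝ)-1) * (n:ℝ) ≤ 4 * (y*y) * (n:ℝ) :=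
        mul_le_mul_of_nonneg_right hmm hn0.le
      have key2 : 4 * (y*y) * (n:ℝ) ≤ 8 * (y*y) * ((n:ℝ)-1) := by
        nlinarith [mul_nonneg (by nlinarith : (0:ℝ) ≤ y*y) (by linarith : (0:ℝ) ≤ 4*(n:ℝ) - 8)]
      linarith
    linarith
  · -- upper bound
    filter_upwards with n
    exact ENNReal.toReal_mono (by simp) (prob_le_one)
end

section
/- Let m := ⌊n^α⌋ for 0 ≤ α ≤ 1 and define the truncated external length 𝐿̂_n^{α,1} := Σ_{i=1}^n (T_{ρ(i)} ∧ T_m − T_{ρ(i)} ∧ T_n). Then E(𝐿̂_n^{α,1}) = 2(n−m)/(n−1). -/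
open MeasureTheory ProbabilityTheory

set_option linter.unusedSectionVars false
section Aux
open Finset Real Set

lemma gpdf_eq (x : ℝ) : gammaPDFReal 1 1 x = if 0 ≤ x then Real.exp (-x) else 0 := by
  unfold gammaPDFReal
  simp [Real.Gamma_one, Real.rpow_one, Real.rpow_zero]

lemma gpdf_mul (x : ℝ) : gammaPDFReal 1 1 x * x
    = (Set.Ioi (0:ℝ)).indicator (fun y => Real.exp (-y) * y) x := by
  rw [gpdf_eq]
  rcases lt_trichotomy x 0 with h | h | h
  · simp [Set.indicator_of_notMem, h.not_ge, not_lt.mpr h.le, Set.mem_Ioi]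
  · subst h; simp
  · simp [Set.indicator_of_mem, Set.mem_Ioi.mpr h, h.le]

lemma expMeasure_one_int {φ : ℝ → ℝ} :
    ∫ x, φ x ∂(expMeasure 1) = ∫ x, gammaPDFReal 1 1 x * φ x := by
  have hm : Measurable fun x => Real.toNNReal (gammaPDFReal 1 1 x) :=
    (measurable_gammaPDFReal 1 1).real_toNNReal
  have : expMeasure 1 = volume.withDensity
      (fun x => ((Real.toNNReal (gammaPDFReal 1 1 x) : NNReal) : ENNReal)) := rfl
  rw [this, integral_withDensity_eq_integral_smul hm]
  congr 1; ext x
  rw [NNReal.smul_def, smul_eq_mul, Real.coe_toNNReal _ (gammaPDFReal_nonneg one_pos one_pos x)]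

lemma exp_one_mean : ∫ x, x ∂(expMeasure 1) = 1 := by
  rw [expMeasure_one_int]
  have : ∀ x : ℝ, gammaPDFReal 1 1 x * x
      = (Set.Ioi (0:ℝ)).indicator (fun y => Real.exp (-y) * y) x := gpdf_mul
  rw [show (fun x => gammaPDFReal 1 1 x * x) = (Set.Ioi (0:ℝ)).indicator (fun y => Real.exp (-y) * y) from funext this]
  rw [integral_indicator measurableSet_Ioi]
  have h2 := Real.Gamma_eq_integral (by norm_num : (0:ℝ) < 2)
  rw [Real.Gamma_two] at h2
  rw [h2]
  apply setIntegral_congr_fun measurableSet_Ioi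
  intro x _
  norm_num

lemma exp_one_integrable : Integrable (fun x : ℝ => x) (expMeasure 1) := by
  have hm : Measurable fun x => Real.toNNReal (gammaPDFReal 1 1 x) :=
    (measurable_gammaPDFReal 1 1).real_toNNReal
  have he : expMeasure 1 = volume.withDensity
      (fun x => ((Real.toNNReal (gammaPDFReal 1 1 x) : NNReal) : ENNReal)) := rfl
  rw [he, integrable_withDensity_iff_integrable_smul hm]
  have : (fun x : ℝ => Real.toNNReal (gammaPDFReal 1 1 x) • x)
      = (Set.Ioi (0:ℝ)).indicator (fun y => Real.exp (-y) * y) := by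
    funext x
    rw [NNReal.smul_def, smul_eq_mul, Real.coe_toNNReal _ (gammaPDFReal_nonneg one_pos one_pos x)]
    exact gpdf_mul x
  rw [this, integrable_indicator_iff measurableSet_Ioi]
  have := Real.GammaIntegral_convergent (by norm_num : (0:ℝ) < 2)
  apply this.congr_fun ?_ measurableSet_Ioi
  intro x _
  norm_num

lemma exp_one_Iio : (expMeasure 1) (Set.Iio 0) = 0 := by
  show (volume.withDensity (gammaPDF 1 1)) (Set.Iio 0) = 0
  rw [withDensity_apply _ measurableSet_Iio]
  rw [setLIntegral_congr_fun measurableSet_Iio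
    (fun x (hx : x < 0) => gammaPDF_of_neg hx)]
  simp




def IsGoodPart (n k : ℕ) (p : Finset (Finset (Fin n))) : Prop :=
  p.card = k ∧ (∀ q ∈ p, q.Nonempty) ∧
  (∀ q ∈ p, ∀ r ∈ p, q ≠ r → Disjoint q r)

def sCount (n : ℕ) (p : Finset (Finset (Fin n))) : ℕ := (p.filter fun q => q.card = 1).card

def mergeOf (n : ℕ) (p : Finset (Finset (Fin n))) (q : Finset (Fin n) × Finset (Fin n)) :
    Finset (Finset (Fin n)) := insert (q.1 ∪ q.2) ((p.erase q.1).erase q.2)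

lemma good_init (n : ℕ) :
    IsGoodPart n n (Finset.univ.image (fun i : Fin n => ({i} : Finset (Fin n)))) := by
  refine ⟨?_, ?_, ?_⟩
  · rw [Finset.card_image_of_injective _ (fun a b h => Finset.singleton_injective h)]
    simp
  · rintro q hq; simp only [Finset.mem_image] at hq; obtain ⟨i, _, rfl⟩ := hq
    exact Finset.singleton_nonempty i
  · rintro q hq r hr hqr
    simp only [Finset.mem_image] at hq hr
    obtain ⟨i, _, rfl⟩ := hq; obtain ⟨j, _, rfl⟩ := hr
    simp only [Finset.disjoint_singleton] ; exact fun h => hqr (by rw [h])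

lemma sCount_init (n : ℕ) :
    sCount n (Finset.univ.image (fun i : Fin n => ({i} : Finset (Fin n)))) = n := by
  unfold sCount
  rw [Finset.filter_true_of_mem, Finset.card_image_of_injective _
    (fun a b h => Finset.singleton_injective h)]
  · simp
  · rintro q hq; simp only [Finset.mem_image] at hq; obtain ⟨i, _, rfl⟩ := hq
    simp

lemma card_singleton_mem (n : ℕ) (p : Finset (Finset (Fin n))) :
    (Finset.univ.filter fun i : Fin n => ({i} : Finset (Fin n)) ∈ p).card = sCount n p := by
  apply Finset.card_bij (fun i _ => ({i} : Finset (Fin n)))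
  · intro i hi; simp only [Finset.mem_filter] at hi ⊢
    exact ⟨hi.2, Finset.card_singleton i⟩
  · intro a ha b hb h; exact Finset.singleton_injective h
  · intro q hq
    simp only [sCount, Finset.mem_filter] at hq
    obtain ⟨a, rfl⟩ := Finset.card_eq_one.1 hq.2
    exact ⟨a, by simp [hq.1], rfl⟩

section Merge
variable {n k : ℕ} {p : Finset (Finset (Fin n))} {q : Finset (Fin n) × Finset (Fin n)}
  (hk : 2 ≤ k) (hp : IsGoodPart n k p) (h1 : q.1 ∈ p) (h2 : q.2 ∈ p) (hne : q.1 ≠ q.2)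

include hk hp h1 h2 hne

lemma two_le_card_union : 2 ≤ (q.1 ∪ q.2).card := by
  have hd : Disjoint q.1 q.2 := hp.2.2 _ h1 _ h2 hne
  rw [Finset.card_union_of_disjoint hd]
  have := Finset.card_pos.2 (hp.2.1 _ h1)
  have := Finset.card_pos.2 (hp.2.1 _ h2)
  omega

lemma union_not_mem_erase : q.1 ∪ q.2 ∉ (p.erase q.1).erase q.2 := by
  intro hmem
  have hr : q.1 ∪ q.2 ∈ p := Finset.mem_of_mem_erase (Finset.mem_of_mem_erase hmem)
  have hru : q.1 ∪ q.2 ≠ q.1 := (Finset.ne_of_mem_erase (Finset.mem_of_mem_erase hmem))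
  have hd : Disjoint (q.1 ∪ q.2) q.1 := hp.2.2 _ hr _ h1 hru
  have : q.1 ⊆ q.1 ∪ q.2 := Finset.subset_union_left
  have hq1 : q.1 = ∅ := Finset.eq_empty_of_forall_notMem
    (fun x hx => (Finset.disjoint_left.1 hd (this hx)) hx)
  exact (hp.2.1 _ h1).ne_empty hq1

lemma good_merge : IsGoodPart n (k - 1) (mergeOf n p q) := by
  have hd : Disjoint q.1 q.2 := hp.2.2 _ h1 _ h2 hne
  have h2e : q.2 ∈ p.erase q.1 := Finset.mem_erase.2 ⟨fun h => hne h.symm, h2⟩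
  refine ⟨?_, ?_, ?_⟩
  · rw [mergeOf, Finset.card_insert_of_notMem (union_not_mem_erase hk hp h1 h2 hne),
      Finset.card_erase_of_mem h2e, Finset.card_erase_of_mem h1, hp.1]
    omega
  · intro r hr
    rcases Finset.mem_insert.1 hr with rfl | hr
    · exact (hp.2.1 _ h1).mono Finset.subset_union_left
    · exact hp.2.1 _ (Finset.mem_of_mem_erase (Finset.mem_of_mem_erase hr))
  · intro r hr s hs hrs
    rcases Finset.mem_insert.1 hr with rfl | hr <;> rcases Finset.mem_insert.1 hs with rfl | hs
    · exact absurd rfl hrs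
    · have hsp := Finset.mem_of_mem_erase (Finset.mem_of_mem_erase hs)
      have hs1 : s ≠ q.1 := Finset.ne_of_mem_erase (Finset.mem_of_mem_erase hs)
      have hs2 : s ≠ q.2 := Finset.ne_of_mem_erase hs
      exact Finset.disjoint_union_left.2
        ⟨hp.2.2 _ h1 _ hsp (Ne.symm hs1), hp.2.2 _ h2 _ hsp (Ne.symm hs2)⟩
    · have hrp := Finset.mem_of_mem_erase (Finset.mem_of_mem_erase hr)
      have hr1 : r ≠ q.1 := Finset.ne_of_mem_erase (Finset.mem_of_mem_erase hr)
      have hr2 : r ≠ q.2 := Finset.ne_of_mem_erase hr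
      exact Finset.disjoint_union_right.2 ⟨hp.2.2 _ hrp _ h1 hr1, hp.2.2 _ hrp _ h2 hr2⟩
    · exact hp.2.2 _ (Finset.mem_of_mem_erase (Finset.mem_of_mem_erase hr)) _
        (Finset.mem_of_mem_erase (Finset.mem_of_mem_erase hs)) hrs

lemma sCount_merge : (sCount n (mergeOf n p q) : ℝ)
    = (sCount n p : ℝ) - (if q.1.card = 1 then 1 else 0) - (if q.2.card = 1 then 1 else 0) := by
  have hcu : (q.1 ∪ q.2).card ≠ 1 := by
    have := two_le_card_union hk hp h1 h2 hne; omega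
  have h2e : q.2 ∈ p.erase q.1 := Finset.mem_erase.2 ⟨fun h => hne h.symm, h2⟩
  have : sCount n (mergeOf n p q) = (((p.filter fun r => r.card = 1).erase q.1).erase q.2).card := by
    unfold sCount mergeOf
    rw [Finset.filter_insert, if_neg hcu, Finset.filter_erase, Finset.filter_erase]
  rw [this]
  by_cases c1 : q.1.card = 1 <;> by_cases c2 : q.2.card = 1
  · have m1 : q.1 ∈ p.filter fun r => r.card = 1 := Finset.mem_filter.2 ⟨h1, c1⟩
    have m2 : q.2 ∈ (p.filter fun r => r.card = 1).erase q.1 :=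
      Finset.mem_erase.2 ⟨fun h => hne h.symm, Finset.mem_filter.2 ⟨h2, c2⟩⟩
    rw [Finset.card_erase_of_mem m2, Finset.card_erase_of_mem m1]
    have hX : 2 ≤ (p.filter fun r => r.card = 1).card :=
      Finset.one_lt_card.2 ⟨q.1, m1, q.2, Finset.mem_filter.2 ⟨h2, c2⟩, hne⟩
    rw [if_pos c1, if_pos c2, Nat.cast_sub (by omega), Nat.cast_sub (by omega)]
    simp [sCount]
  · have m1 : q.1 ∈ p.filter fun r => r.card = 1 := Finset.mem_filter.2 ⟨h1, c1⟩
    have m2 : q.2 ∉ (p.filter fun r => r.card = 1).erase q.1 := by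
      intro h; exact c2 (Finset.mem_filter.1 (Finset.mem_of_mem_erase h)).2
    rw [Finset.erase_eq_of_notMem m2, Finset.card_erase_of_mem m1]
    have hX : 1 ≤ (p.filter fun r => r.card = 1).card := Finset.card_pos.2 ⟨q.1, m1⟩
    rw [if_pos c1, if_neg c2, Nat.cast_sub (by omega)]
    simp [sCount]
  · have m2 : q.2 ∈ p.filter fun r => r.card = 1 := Finset.mem_filter.2 ⟨h2, c2⟩
    have m1 : q.1 ∉ p.filter fun r => r.card = 1 := fun h => c1 (Finset.mem_filter.1 h).2
    rw [Finset.erase_eq_of_notMem m1, Finset.card_erase_of_mem m2]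
    have hX : 1 ≤ (p.filter fun r => r.card = 1).card := Finset.card_pos.2 ⟨q.2, m2⟩
    rw [if_neg c1, if_pos c2, Nat.cast_sub (by omega)]
    simp [sCount]
  · have m1 : q.1 ∉ p.filter fun r => r.card = 1 := fun h => c1 (Finset.mem_filter.1 h).2
    have m2 : q.2 ∉ (p.filter fun r => r.card = 1).erase q.1 :=
      fun h => c2 (Finset.mem_filter.1 (Finset.mem_of_mem_erase h)).2
    rw [Finset.erase_eq_of_notMem m2, Finset.erase_eq_of_notMem m1, if_neg c1, if_neg c2]
    simp [sCount]

lemma singleton_mem_merge {i : Fin n} (hi : ({i} : Finset (Fin n)) ∈ mergeOf n p q) :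
    ({i} : Finset (Fin n)) ∈ p := by
  rcases Finset.mem_insert.1 hi with h | h
  · exfalso
    have := two_le_card_union hk hp h1 h2 hne
    rw [← h] at this; simp at this
  · exact Finset.mem_of_mem_erase (Finset.mem_of_mem_erase h)

end Merge

lemma sum_pairs_fst {n : ℕ} (p : Finset (Finset (Fin n))) (f : Finset (Fin n) → ℝ) :
    ∑ q ∈ (p ×ˢ p).filter (fun q => q.1 ≠ q.2), f q.1
      = ((p.card : ℝ) - 1) * ∑ a ∈ p, f a := by
  rw [Finset.sum_filter, Finset.sum_product]
  have : ∀ a ∈ p, (∑ b ∈ p, if a ≠ b then f a else 0)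
      = (p.card : ℝ) * f a - f a := by
    intro a ha
    have : (∑ b ∈ p, if a ≠ b then f a else 0)
        = ∑ b ∈ p, (f a - if a = b then f a else 0) := by
      apply Finset.sum_congr rfl; intro b _
      by_cases h : a = b <;> simp [h]
    rw [this, Finset.sum_sub_distrib, Finset.sum_const, Finset.sum_ite_eq p a (fun _ => f a),
      if_pos ha, nsmul_eq_mul]
  rw [Finset.sum_congr rfl this, Finset.sum_sub_distrib, ← Finset.mul_sum]
  ring

lemma sum_pairs_snd {n : ℕ} (p : Finset (Finset (Fin n))) (f : Finset (Fin n) → ℝ) :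
    ∑ q ∈ (p ×ˢ p).filter (fun q => q.1 ≠ q.2), f q.2
      = ((p.card : ℝ) - 1) * ∑ a ∈ p, f a := by
  rw [Finset.sum_filter, Finset.sum_product]
  have : ∀ a ∈ p, (∑ b ∈ p, if a ≠ b then f b else 0)
      = (∑ b ∈ p, f b) - f a := by
    intro a ha
    have : (∑ b ∈ p, if a ≠ b then f b else 0)
        = ∑ b ∈ p, (f b - if a = b then f b else 0) := by
      apply Finset.sum_congr rfl; intro b _
      by_cases h : a = b <;> simp [h]
    rw [this, Finset.sum_sub_distrib, Finset.sum_ite_eq p a f, if_pos ha]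
  rw [Finset.sum_congr rfl this, Finset.sum_sub_distrib, Finset.sum_const, nsmul_eq_mul]
  ring

lemma merge_sum {n k : ℕ} (hk : 2 ≤ k) {p : Finset (Finset (Fin n))} (hp : IsGoodPart n k p) :
    ∑ p' : Finset (Finset (Fin n)), (sCount n p' : ℝ) * mergeProb n k p p'
      = (sCount n p : ℝ) * ((k:ℝ) - 2) / (k:ℝ) := by
  have hk2 : (2:ℝ) ≤ (k:ℝ) := by exact_mod_cast hk
  have hk0 : (k:ℝ) ≠ 0 := by linarith
  have hk1 : (k:ℝ) - 1 ≠ 0 := by linarith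
  set D := (p ×ˢ p).filter (fun q => q.1 ≠ q.2) with hD
  have card_pairs : ∀ p' : Finset (Finset (Fin n)),
      (Nat.card {q : Finset (Fin n) × Finset (Fin n) //
        q.1 ∈ p ∧ q.2 ∈ p ∧ q.1 ≠ q.2 ∧
        p' = insert (q.1 ∪ q.2) ((p.erase q.1).erase q.2)} : ℝ)
      = ∑ q ∈ D, (if p' = mergeOf n p q then (1:ℝ) else 0) := by
    intro p'
    have hset : Finset.univ.filter (fun q : Finset (Fin n) × Finset (Fin n) =>
        q.1 ∈ p ∧ q.2 ∈ p ∧ q.1 ≠ q.2 ∧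
        p' = insert (q.1 ∪ q.2) ((p.erase q.1).erase q.2))
        = D.filter (fun q => p' = mergeOf n p q) := by
      ext q
      simp only [hD, Finset.mem_filter, Finset.mem_univ, Finset.mem_product, true_and, mergeOf]
      tauto
    rw [Nat.card_eq_fintype_card, Fintype.card_subtype, hset, Finset.sum_boole]
  have key : ∑ p' : Finset (Finset (Fin n)), (sCount n p' : ℝ) *
      (Nat.card {q : Finset (Fin n) × Finset (Fin n) //
        q.1 ∈ p ∧ q.2 ∈ p ∧ q.1 ≠ q.2 ∧
        p' = insert (q.1 ∪ q.2) ((p.erase q.1).erase q.2)} : ℝ)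
      = ∑ q ∈ D, (sCount n (mergeOf n p q) : ℝ) := by
    have step : ∀ p' : Finset (Finset (Fin n)), (sCount n p' : ℝ) *
        (Nat.card {q : Finset (Fin n) × Finset (Fin n) //
          q.1 ∈ p ∧ q.2 ∈ p ∧ q.1 ≠ q.2 ∧
          p' = insert (q.1 ∪ q.2) ((p.erase q.1).erase q.2)} : ℝ)
        = ∑ q ∈ D, (if p' = mergeOf n p q then (sCount n p' : ℝ) else 0) := by
      intro p'
      rw [card_pairs p', Finset.mul_sum]
      apply Finset.sum_congr rfl; intro q _
      by_cases h : p' = mergeOf n p q <;> simp [h]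
    rw [Finset.sum_congr rfl (fun p' _ => step p'), Finset.sum_comm]
    apply Finset.sum_congr rfl; intro q _
    rw [Finset.sum_ite_eq' Finset.univ (mergeOf n p q) (fun p' => (sCount n p' : ℝ)),
      if_pos (Finset.mem_univ _)]
  have memD : ∀ q ∈ D, q.1 ∈ p ∧ q.2 ∈ p ∧ q.1 ≠ q.2 := by
    intro q hq
    simp only [hD, Finset.mem_filter, Finset.mem_product] at hq
    exact ⟨hq.1.1, hq.1.2, hq.2⟩
  have key2 : ∑ q ∈ D, (sCount n (mergeOf n p q) : ℝ)
      = ((k:ℝ) - 1) * ((k:ℝ) - 2) * (sCount n p : ℝ) := by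
    have step : ∀ q ∈ D, (sCount n (mergeOf n p q) : ℝ)
        = (sCount n p : ℝ) - (if q.1.card = 1 then (1:ℝ) else 0)
          - (if q.2.card = 1 then (1:ℝ) else 0) := by
      intro q hq
      obtain ⟨h1, h2, hne⟩ := memD q hq
      exact sCount_merge hk hp h1 h2 hne
    rw [Finset.sum_congr rfl step, Finset.sum_sub_distrib, Finset.sum_sub_distrib]
    have e1 : ∑ q ∈ D, (sCount n p : ℝ) = ((k:ℝ)-1) * ((k:ℝ) * (sCount n p : ℝ)) := by
      have := sum_pairs_fst p (fun _ => (sCount n p : ℝ))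
      rw [hD, this, Finset.sum_const, hp.1, nsmul_eq_mul]
    have e2 : ∑ q ∈ D, (if q.1.card = 1 then (1:ℝ) else 0)
        = ((k:ℝ)-1) * (sCount n p : ℝ) := by
      have := sum_pairs_fst p (fun a => if a.card = 1 then (1:ℝ) else 0)
      rw [hD, this, Finset.sum_boole, hp.1]; rfl
    have e3 : ∑ q ∈ D, (if q.2.card = 1 then (1:ℝ) else 0)
        = ((k:ℝ)-1) * (sCount n p : ℝ) := by
      have := sum_pairs_snd p (fun a => if a.card = 1 then (1:ℝ) else 0)
      rw [hD, this, Finset.sum_boole, hp.1]; rfl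
    rw [e1, e2, e3]
    ring
  unfold mergeProb
  have : ∀ p' : Finset (Finset (Fin n)), (sCount n p' : ℝ) *
      ((Nat.card {q : Finset (Fin n) × Finset (Fin n) //
        q.1 ∈ p ∧ q.2 ∈ p ∧ q.1 ≠ q.2 ∧
        p' = insert (q.1 ∪ q.2) ((p.erase q.1).erase q.2)} : ℝ) / ((k : ℝ) * ((k : ℝ) - 1)))
      = ((sCount n p' : ℝ) *
      (Nat.card {q : Finset (Fin n) × Finset (Fin n) //
        q.1 ∈ p ∧ q.2 ∈ p ∧ q.1 ≠ q.2 ∧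
        p' = insert (q.1 ∪ q.2) ((p.erase q.1).erase q.2)} : ℝ)) / ((k : ℝ) * ((k : ℝ) - 1)) := by
    intro p'; ring
  rw [Finset.sum_congr rfl (fun p' _ => this p'), ← Finset.sum_div, key, key2]
  field_simp

end Aux

section Chain

variable {Ω : Type*} [MeasurableSpace Ω] {μ : Measure Ω} {n : ℕ}
  {P : ℕ → Ω → Finset (Finset (Fin n))}

abbrev Hist (n k : ℕ) := {x // x ∈ Finset.Icc k n} → Finset (Finset (Fin n))

noncomputable def histExt (n k : ℕ) (f : Hist n k) : ℕ → Finset (Finset (Fin n)) :=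
  fun j => if h : j ∈ Finset.Icc k n then f ⟨j, h⟩ else ∅

def histEvent (n : ℕ) {Ω : Type*} (P : ℕ → Ω → Finset (Finset (Fin n))) (k : ℕ)
    (f : Hist n k) : Set Ω :=
  {ω | ∀ j, k ≤ j → j ≤ n → P j ω = histExt n k f j}

lemma histEvent_measurable (hmeas : ∀ k p, MeasurableSet {ω | P k ω = p}) (k : ℕ)
    (f : Hist n k) : MeasurableSet (histEvent n P k f) := by
  have : histEvent n P k f
      = ⋂ (j : ℕ) (_ : k ≤ j) (_ : j ≤ n), {ω | P j ω = histExt n k f j} := by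
    ext ω; simp [histEvent, Set.mem_iInter]
  rw [this]
  exact MeasurableSet.iInter fun j => MeasurableSet.iInter fun _ =>
    MeasurableSet.iInter fun _ => hmeas j _

lemma mem_histEvent_self (k : ℕ) (ω : Ω) :
    ω ∈ histEvent n P k (fun j => P (j : ℕ) ω) := by
  intro j hj1 hj2
  have hj : j ∈ Finset.Icc k n := Finset.mem_Icc.2 ⟨hj1, hj2⟩
  simp [histExt, hj]

lemma histEvent_eval {k : ℕ} {f : Hist n k} {ω : Ω} (hω : ω ∈ histEvent n P k f)
    {j : ℕ} (hj1 : k ≤ j) (hj2 : j ≤ n) :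
    P j ω = histExt n k f j := hω j hj1 hj2

lemma sum_histEvent [IsFiniteMeasure μ] (hmeas : ∀ k p, MeasurableSet {ω | P k ω = p})
    (k : ℕ) {A : Set Ω} (hA : MeasurableSet A) :
    ∑ f : Hist n k, μ (A ∩ histEvent n P k f) = μ A := by
  classical
  have hcover : A = ⋃ f ∈ (Finset.univ : Finset (Hist n k)), (A ∩ histEvent n P k f) := by
    ext ω
    simp only [Set.mem_iUnion, Finset.mem_univ, exists_prop, true_and, Set.mem_inter_iff]
    constructor
    · intro hω
      exact ⟨fun j => P (j : ℕ) ω, hω, mem_histEvent_self k ω⟩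
    · rintro ⟨f, hf, _⟩; exact hf
  have hdisj : Set.PairwiseDisjoint (↑(Finset.univ : Finset (Hist n k)))
      (fun f => A ∩ histEvent n P k f) := by
    intro f _ g _ hfg
    obtain ⟨j0, hj0⟩ := Function.ne_iff.1 hfg
    refine Set.disjoint_left.2 fun ω hωf hωg => hj0 ?_
    have hmem := j0.2
    rw [Finset.mem_Icc] at hmem
    have h1 := hωf.2 j0 hmem.1 hmem.2
    have h2 := hωg.2 j0 hmem.1 hmem.2
    rw [h1] at h2
    simpa [histExt, j0.2] using h2
  calc ∑ f : Hist n k, μ (A ∩ histEvent n P k f)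
      = μ (⋃ f ∈ (Finset.univ : Finset (Hist n k)), (A ∩ histEvent n P k f)) :=
        (measure_biUnion_finset hdisj
          (fun f _ => hA.inter (histEvent_measurable hmeas k f))).symm
    _ = μ A := by rw [← hcover]

lemma integral_discrete [IsFiniteMeasure μ] (hmeas : ∀ k p, MeasurableSet {ω | P k ω = p})
    (k : ℕ) (g : Finset (Finset (Fin n)) → ℝ) :
    ∫ ω, g (P k ω) ∂μ
      = ∑ p : Finset (Finset (Fin n)), g p * (μ {ω | P k ω = p}).toReal := by
  classical
  have hfun : (fun ω => g (P k ω)) = fun ω => ∑ p : Finset (Finset (Fin n)),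
      Set.indicator {ω | P k ω = p} (fun _ => g p) ω := by
    funext ω
    simp only [Set.indicator_apply, Set.mem_setOf_eq]
    rw [Finset.sum_ite_eq Finset.univ (P k ω) g]
    simp
  rw [hfun, integral_finset_sum]
  · apply Finset.sum_congr rfl; intro p _
    rw [integral_indicator_const _ (hmeas k p), smul_eq_mul, mul_comm, measureReal_def]
  · intro p _
    exact (integrable_indicator_iff (hmeas k p)).2
      (integrableOn_const (measure_ne_top μ _))

lemma sum_histEvent_weight [IsFiniteMeasure μ]
    (hmeas : ∀ k p, MeasurableSet {ω | P k ω = p}) (k : ℕ) (hkn : k ≤ n)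
    (g : Finset (Finset (Fin n)) → ℝ) :
    ∑ f : Hist n k, (μ (histEvent n P k f)).toReal * g (histExt n k f k)
      = ∑ p : Finset (Finset (Fin n)), g p * (μ {ω | P k ω = p}).toReal := by
  classical
  have hinter : ∀ (f : Hist n k) (p : Finset (Finset (Fin n))),
      {ω | P k ω = p} ∩ histEvent n P k f
        = if histExt n k f k = p then histEvent n P k f else ∅ := by
    intro f p
    split_ifs with h
    · ext ω
      simp only [Set.mem_inter_iff, Set.mem_setOf_eq, and_iff_right_iff_imp]
      intro hω
      rw [histEvent_eval hω le_rfl hkn, h]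
    · ext ω
      simp only [Set.mem_inter_iff, Set.mem_setOf_eq, Set.mem_empty_iff_false, iff_false,
        not_and]
      intro hp hω
      exact h (by rw [← histEvent_eval hω le_rfl hkn, hp])
  have step : ∀ p : Finset (Finset (Fin n)),
      (μ {ω | P k ω = p}).toReal
        = ∑ f : Hist n k, (if histExt n k f k = p then (μ (histEvent n P k f)).toReal else 0) := by
    intro p
    rw [← sum_histEvent hmeas k (hmeas k p), ENNReal.toReal_sum
      (fun f _ => measure_ne_top μ _)]
    apply Finset.sum_congr rfl
    intro f _
    rw [hinter f p]
    split_ifs <;> simp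
  calc ∑ f : Hist n k, (μ (histEvent n P k f)).toReal * g (histExt n k f k)
      = ∑ f : Hist n k, ∑ p : Finset (Finset (Fin n)),
          g p * (if histExt n k f k = p then (μ (histEvent n P k f)).toReal else 0) := by
        apply Finset.sum_congr rfl; intro f _
        rw [Finset.sum_eq_single (histExt n k f k)]
        · simp [mul_comm]
        · intro p _ hp; rw [if_neg (fun h => hp h.symm), mul_zero]
        · intro h; exact absurd (Finset.mem_univ _) h
    _ = ∑ p : Finset (Finset (Fin n)), ∑ f : Hist n k,
          g p * (if histExt n k f k = p then (μ (histEvent n P k f)).toReal else 0) :=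
        Finset.sum_comm
    _ = ∑ p : Finset (Finset (Fin n)), g p * (μ {ω | P k ω = p}).toReal := by
        apply Finset.sum_congr rfl; intro p _
        rw [step p, Finset.mul_sum]

end Chain

section Kingman

variable {Ω : Type*} [MeasurableSpace Ω] {μ : Measure Ω} {n : ℕ}
  {P : ℕ → Ω → Finset (Finset (Fin n))}

lemma measure_no_merge_zero [IsProbabilityMeasure μ] (hP : IsKingmanPartition n μ P)
    {k : ℕ} (hk2 : 2 ≤ k) (hkn : k ≤ n) (p p' : Finset (Finset (Fin n)))
    (hno : ¬ ∃ q : Finset (Fin n) × Finset (Fin n), q.1 ∈ p ∧ q.2 ∈ p ∧ q.1 ≠ q.2 ∧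
      p' = insert (q.1 ∪ q.2) ((p.erase q.1).erase q.2)) :
    μ ({ω | P k ω = p} ∩ {ω | P (k-1) ω = p'}) = 0 := by
  classical
  have hmp : mergeProb n k p p' = 0 := by
    unfold mergeProb
    have : IsEmpty {q : Finset (Fin n) × Finset (Fin n) //
        q.1 ∈ p ∧ q.2 ∈ p ∧ q.1 ≠ q.2 ∧
        p' = insert (q.1 ∪ q.2) ((p.erase q.1).erase q.2)} :=
      ⟨fun q => hno ⟨q.1, q.2⟩⟩
    rw [Nat.card_of_isEmpty]
    simp
  have hA : MeasurableSet ({ω | P k ω = p} ∩ {ω | P (k-1) ω = p'}) :=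
    (hP.1 k p).inter (hP.1 (k-1) p')
  rw [← sum_histEvent hP.1 k hA]
  apply Finset.sum_eq_zero
  intro f _
  by_cases hfk : histExt n k f k = p
  · have key := hP.2.2 k hk2 hkn (histExt n k f) p'
    rw [hfk, hmp, mul_zero] at key
    have h0 : μ ({ω | ∀ j, k ≤ j → j ≤ n → P j ω = histExt n k f j}
        ∩ {ω | P (k - 1) ω = p'}) = 0 := by
      have hne := measure_ne_top μ ({ω | ∀ j, k ≤ j → j ≤ n → P j ω = histExt n k f j}
        ∩ {ω | P (k - 1) ω = p'})
      exact ((ENNReal.toReal_eq_zero_iff _).1 key).resolve_right hne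
    apply measure_mono_null _ h0
    intro ω hω
    exact ⟨hω.2, hω.1.2⟩
  · have hempty : ({ω | P k ω = p} ∩ {ω | P (k-1) ω = p'}) ∩ histEvent n P k f = ∅ := by
      ext ω
      constructor
      · rintro ⟨⟨h1, _⟩, hω⟩
        exact absurd (by rw [← histEvent_eval hω le_rfl hkn, h1]) hfk
      · intro h; cases h
    rw [hempty, measure_empty]

lemma ae_mergeStep [IsProbabilityMeasure μ] (hP : IsKingmanPartition n μ P) :
    ∀ᵐ ω ∂μ, ∀ k, 2 ≤ k → k ≤ n → ∃ q : Finset (Fin n) × Finset (Fin n),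
      q.1 ∈ P k ω ∧ q.2 ∈ P k ω ∧ q.1 ≠ q.2 ∧
      P (k-1) ω = insert (q.1 ∪ q.2) (((P k ω).erase q.1).erase q.2) := by
  rw [ae_all_iff]
  intro k
  by_cases hk : 2 ≤ k ∧ k ≤ n
  · obtain ⟨hk2, hkn⟩ := hk
    rw [ae_iff]
    have hsub : {ω | ¬ (2 ≤ k → k ≤ n → ∃ q : Finset (Fin n) × Finset (Fin n),
        q.1 ∈ P k ω ∧ q.2 ∈ P k ω ∧ q.1 ≠ q.2 ∧
        P (k-1) ω = insert (q.1 ∪ q.2) (((P k ω).erase q.1).erase q.2))}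
        ⊆ ⋃ (pp : Finset (Finset (Fin n)) × Finset (Finset (Fin n))),
          (if ¬ ∃ q : Finset (Fin n) × Finset (Fin n), q.1 ∈ pp.1 ∧ q.2 ∈ pp.1 ∧ q.1 ≠ q.2 ∧
              pp.2 = insert (q.1 ∪ q.2) ((pp.1.erase q.1).erase q.2)
            then ({ω | P k ω = pp.1} ∩ {ω | P (k-1) ω = pp.2}) else ∅) := by
      intro ω hω
      simp only [Set.mem_setOf_eq, hk2, hkn, forall_true_left, true_implies] at hω
      refine Set.mem_iUnion.2 ⟨(P k ω, P (k-1) ω), ?_⟩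
      rw [if_pos hω]
      exact ⟨rfl, rfl⟩
    have hz : μ (⋃ (pp : Finset (Finset (Fin n)) × Finset (Finset (Fin n))),
        (if ¬ ∃ q : Finset (Fin n) × Finset (Fin n), q.1 ∈ pp.1 ∧ q.2 ∈ pp.1 ∧ q.1 ≠ q.2 ∧
            pp.2 = insert (q.1 ∪ q.2) ((pp.1.erase q.1).erase q.2)
          then ({ω | P k ω = pp.1} ∩ {ω | P (k-1) ω = pp.2}) else ∅)) = 0 := by
      apply measure_iUnion_null
      intro pp
      split_ifs with h
      · exact measure_empty
      · exact measure_no_merge_zero hP hk2 hkn pp.1 pp.2 h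
    exact measure_mono_null hsub hz
  · apply ae_of_all
    intro ω hk2 hkn
    exact absurd ⟨hk2, hkn⟩ hk

def GoodOmega (n : ℕ) {Ω : Type*} (P : ℕ → Ω → Finset (Finset (Fin n))) (ω : Ω) : Prop :=
  P n ω = Finset.univ.image (fun i : Fin n => ({i} : Finset (Fin n))) ∧
  ∀ k, 2 ≤ k → k ≤ n → ∃ q : Finset (Fin n) × Finset (Fin n),
    q.1 ∈ P k ω ∧ q.2 ∈ P k ω ∧ q.1 ≠ q.2 ∧
    P (k-1) ω = insert (q.1 ∪ q.2) (((P k ω).erase q.1).erase q.2)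

lemma ae_goodOmega [IsProbabilityMeasure μ] (hP : IsKingmanPartition n μ P) :
    ∀ᵐ ω ∂μ, GoodOmega n P ω :=
  (hP.2.1).and (ae_mergeStep hP)

lemma goodOmega_isGood (hn : 2 ≤ n) {ω : Ω} (hω : GoodOmega n P ω) :
    ∀ k, 1 ≤ k → k ≤ n → IsGoodPart n k (P k ω) := by
  have key : ∀ d k, k + d = n → 1 ≤ k → IsGoodPart n k (P k ω) := by
    intro d
    induction d with
    | zero =>
      intro k hk _
      have hkn : k = n := by omega
      rw [hkn, hω.1]
      exact good_init n
    | succ d ih =>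
      intro k hk h1
      have hgood := ih (k+1) (by omega) (by omega)
      obtain ⟨q, hq1, hq2, hqne, heq⟩ := hω.2 (k+1) (by omega) (by omega)
      have heq' : P k ω = mergeOf n (P (k+1) ω) q := by
        simpa [mergeOf] using heq
      rw [heq']
      have := good_merge (by omega) hgood hq1 hq2 hqne
      simpa using this
  intro k h1 hkn
  exact key (n - k) k (by omega) h1

lemma goodOmega_singleton_mono (hn : 2 ≤ n) {ω : Ω} (hω : GoodOmega n P ω) (i : Fin n) :
    ∀ j l, 1 ≤ j → j ≤ l → l ≤ n →
      ({i} : Finset (Fin n)) ∈ P j ω → ({i} : Finset (Fin n)) ∈ P l ω := by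
  have step : ∀ k, 2 ≤ k → k ≤ n →
      ({i} : Finset (Fin n)) ∈ P (k-1) ω → ({i} : Finset (Fin n)) ∈ P k ω := by
    intro k hk2 hkn hmem
    obtain ⟨q, hq1, hq2, hqne, heq⟩ := hω.2 k hk2 hkn
    have hgood := goodOmega_isGood hn hω k (by omega) hkn
    rw [heq] at hmem
    exact singleton_mem_merge hk2 hgood hq1 hq2 hqne hmem
  intro j l h1 hjl hln
  induction l with
  | zero => omega
  | succ l ih =>
    intro hmem
    rcases Nat.eq_or_lt_of_le hjl with h | h
    · rw [h] at hmem; exact hmem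
    · have hj : ({i} : Finset (Fin n)) ∈ P l ω := ih (by omega) (by omega) hmem
      have := step (l+1) (by omega) hln
      simpa using this (by simpa using hj)

lemma goodOmega_rho (hn : 2 ≤ n) {ω : Ω} (hω : GoodOmega n P ω) (i : Fin n) :
    1 ≤ rho n P i ω ∧ rho n P i ω ≤ n ∧
      ∀ k, 1 ≤ k → k ≤ n → (({i} : Finset (Fin n)) ∈ P k ω ↔ rho n P i ω < k) := by
  have h1n : 1 ≤ n := by omega
  have hP1 : ({i} : Finset (Fin n)) ∉ P 1 ω := by
    obtain ⟨q, hq1, hq2, hqne, heq⟩ := hω.2 2 le_rfl hn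
    have hgood2 : IsGoodPart n 2 (P 2 ω) := goodOmega_isGood hn hω 2 (by omega) hn
    have hcard : (P 1 ω).card = 1 := (goodOmega_isGood hn hω 1 (by omega) h1n).1
    intro hmem
    have heq1 : P 1 ω = insert (q.1 ∪ q.2) (((P 2 ω).erase q.1).erase q.2) := by
      simpa using heq
    have hu : q.1 ∪ q.2 ∈ P 1 ω := by rw [heq1]; exact Finset.mem_insert_self _ _
    obtain ⟨r, hr⟩ := Finset.card_eq_one.1 hcard
    rw [hr, Finset.mem_singleton] at hmem hu
    have h2c := two_le_card_union le_rfl hgood2 hq1 hq2 hqne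
    rw [show q.1 ∪ q.2 = ({i} : Finset (Fin n)) from hu.trans hmem.symm] at h2c
    simp at h2c
  have h1S : 1 ∈ {k | 1 ≤ k ∧ k ≤ n ∧ ({i} : Finset (Fin n)) ∉ P k ω} := ⟨le_rfl, h1n, hP1⟩
  have hbdd : BddAbove {k | 1 ≤ k ∧ k ≤ n ∧ ({i} : Finset (Fin n)) ∉ P k ω} :=
    ⟨n, fun x hx => hx.2.1⟩
  have hmem : rho n P i ω ∈ {k | 1 ≤ k ∧ k ≤ n ∧ ({i} : Finset (Fin n)) ∉ P k ω} :=
    Nat.sSup_mem ⟨1, h1S⟩ hbdd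
  refine ⟨hmem.1, hmem.2.1, ?_⟩
  intro k h1k hkn
  constructor
  · intro hik
    by_contra h
    push_neg at h
    exact hmem.2.2
      (goodOmega_singleton_mono hn hω i k (rho n P i ω) h1k h hmem.2.1 hik)
  · intro hlt
    by_contra hik
    exact absurd (le_csSup hbdd ⟨h1k, hkn, hik⟩) (not_le.2 hlt)

lemma sCount_integral (hn : 2 ≤ n) [IsProbabilityMeasure μ]
    (hP : IsKingmanPartition n μ P) :
    ∀ k, 1 ≤ k → k ≤ n →
      ∫ ω, (sCount n (P k ω) : ℝ) ∂μ = (k:ℝ) * ((k:ℝ)-1) / ((n:ℝ)-1) := by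
  classical
  have hn1 : (n:ℝ) - 1 ≠ 0 := by
    have : (2:ℝ) ≤ (n:ℝ) := by exact_mod_cast hn
    linarith
  have key : ∀ d k, k + d = n → 1 ≤ k →
      ∫ ω, (sCount n (P k ω) : ℝ) ∂μ = (k:ℝ) * ((k:ℝ)-1) / ((n:ℝ)-1) := by
    intro d
    induction d with
    | zero =>
      intro k hk _
      have hkn : k = n := by omega
      rw [hkn]
      have : ∫ ω, (sCount n (P n ω) : ℝ) ∂μ = ∫ _ω, (n : ℝ) ∂μ := by
        apply integral_congr_ae
        filter_upwards [hP.2.1] with ω hω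
        rw [hω, sCount_init]
      rw [this, integral_const, measureReal_def, measure_univ, ENNReal.toReal_one, smul_eq_mul, one_mul]
      field_simp
    | succ d ih =>
      intro k hk h1
      set K := k + 1 with hK
      have hK2 : 2 ≤ K := by omega
      have hKn : K ≤ n := by omega
      have ihK : ∫ ω, (sCount n (P K ω) : ℝ) ∂μ = (K:ℝ) * ((K:ℝ)-1) / ((n:ℝ)-1) :=
        ih K (by omega) (by omega)
      have hmeas := hP.1
      rw [integral_discrete hmeas k (fun p => (sCount n p : ℝ))]
      have hrec : ∀ p' : Finset (Finset (Fin n)),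
          (μ {ω | P k ω = p'}).toReal
            = ∑ f : Hist n K, (μ (histEvent n P K f)).toReal
                * mergeProb n K (histExt n K f K) p' := by
        intro p'
        rw [← sum_histEvent hmeas K (hmeas k p'), ENNReal.toReal_sum
          (fun f _ => measure_ne_top μ _)]
        apply Finset.sum_congr rfl
        intro f _
        have := hP.2.2 K hK2 hKn (histExt n K f) p'
        have hKk : K - 1 = k := by omega
        rw [hKk] at this
        rw [Set.inter_comm] at this
        exact this
      calc ∑ p' : Finset (Finset (Fin n)), (sCount n p' : ℝ) * (μ {ω | P k ω = p'}).toReal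
          = ∑ p' : Finset (Finset (Fin n)), ∑ f : Hist n K,
              (μ (histEvent n P K f)).toReal
                * ((sCount n p' : ℝ) * mergeProb n K (histExt n K f K) p') := by
            apply Finset.sum_congr rfl; intro p' _
            rw [hrec p', Finset.mul_sum]
            apply Finset.sum_congr rfl; intro f _
            ring
        _ = ∑ f : Hist n K, (μ (histEvent n P K f)).toReal
              * ∑ p' : Finset (Finset (Fin n)),
                  (sCount n p' : ℝ) * mergeProb n K (histExt n K f K) p' := by
            rw [Finset.sum_comm]
            apply Finset.sum_congr rfl; intro f _
            rw [Finset.mul_sum]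
        _ = ∑ f : Hist n K, (μ (histEvent n P K f)).toReal
              * ((sCount n (histExt n K f K) : ℝ) * ((K:ℝ) - 2) / (K:ℝ)) := by
            apply Finset.sum_congr rfl; intro f _
            by_cases hzero : μ (histEvent n P K f) = 0
            · rw [hzero]; simp
            · congr 1
              have hGnon : (histEvent n P K f ∩ {ω | GoodOmega n P ω}).Nonempty := by
                by_contra hcon
                rw [Set.not_nonempty_iff_eq_empty] at hcon
                have hsub : histEvent n P K f ⊆ {ω | ¬ GoodOmega n P ω} := by
                  intro ω hωf hg
                  have hmemi : ω ∈ histEvent n P K f ∩ {ω | GoodOmega n P ω} := ⟨hωf, hg⟩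
                  rw [hcon] at hmemi
                  exact hmemi
                have := measure_mono_null hsub ((ae_iff.1 (ae_goodOmega hP)))
                exact hzero this
              obtain ⟨ω, hωf, hωg⟩ := hGnon
              have hPK : P K ω = histExt n K f K := histEvent_eval hωf le_rfl hKn
              have hgood : IsGoodPart n K (histExt n K f K) := by
                rw [← hPK]
                exact goodOmega_isGood hn hωg K (by omega) hKn
              rw [merge_sum hK2 hgood]
        _ = (((K:ℝ) - 2) / (K:ℝ)) * ∑ f : Hist n K, (μ (histEvent n P K f)).toReal
              * (sCount n (histExt n K f K) : ℝ) := by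
            rw [Finset.mul_sum]
            apply Finset.sum_congr rfl; intro f _
            ring
        _ = (((K:ℝ) - 2) / (K:ℝ)) * ∑ p : Finset (Finset (Fin n)),
              (sCount n p : ℝ) * (μ {ω | P K ω = p}).toReal := by
            rw [sum_histEvent_weight hmeas K hKn (fun p => (sCount n p : ℝ))]
        _ = (((K:ℝ) - 2) / (K:ℝ)) * ((K:ℝ) * ((K:ℝ)-1) / ((n:ℝ)-1)) := by
            rw [← integral_discrete hmeas K (fun p => (sCount n p : ℝ)), ihK]
        _ = (k:ℝ) * ((k:ℝ)-1) / ((n:ℝ)-1) := by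
            have hK0 : (K:ℝ) ≠ 0 := by
              have : (2:ℝ) ≤ (K:ℝ) := by exact_mod_cast hK2
              linarith
            rw [hK]
            push_cast
            field_simp
            ring
  intro k h1 hkn
  exact key (n - k) k (by omega) h1

end Kingman

section Times

variable {Ω : Type*} [MeasurableSpace Ω] {μ : Measure Ω} {n : ℕ} {T : ℕ → Ω → ℝ}

lemma kingmanTimes_facts [IsProbabilityMeasure μ] (hT : IsKingmanTimes n μ T)
    {k : ℕ} (hk2 : 2 ≤ k) (hkn : k ≤ n) :
    Integrable (fun ω => T (k-1) ω - T k ω) μ ∧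
    ∫ ω, (T (k-1) ω - T k ω) ∂μ = 2 / ((k:ℝ) * ((k:ℝ) - 1)) ∧
    (∀ᵐ ω ∂μ, 0 ≤ T (k-1) ω - T k ω) := by
  obtain ⟨hTm, hT0, hind, hlaw⟩ := hT
  have hjlt : k - 2 < n - 1 := by omega
  have hlawj := hlaw ⟨k - 2, hjlt⟩
  simp only at hlawj
  rw [show k - 2 + 2 = k by omega, show k - 2 + 1 = k - 1 by omega] at hlawj
  set c : ℝ := (k.choose 2 : ℝ) with hc
  have hcval : c = (k:ℝ) * ((k:ℝ) - 1) / 2 := by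
    rw [hc, Nat.cast_choose_two]
  have hk2R : (2:ℝ) ≤ (k:ℝ) := by exact_mod_cast hk2
  have hcpos : 0 < c := by rw [hcval]; nlinarith
  have hXm : Measurable (fun ω => c * (T (k-1) ω - T k ω)) :=
    (measurable_const.mul ((hTm (k-1)).sub (hTm k)))
  have hXint : Integrable (fun ω => c * (T (k-1) ω - T k ω)) μ := by
    have h1 : Integrable (fun x : ℝ => x)
        (μ.map (fun ω => c * (T (k-1) ω - T k ω))) := by
      rw [hlawj]; exact exp_one_integrable
    exact (integrable_map_measure aestronglyMeasurable_id hXm.aemeasurable).1 h1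
  have hXE : ∫ ω, c * (T (k-1) ω - T k ω) ∂μ = 1 := by
    have h1 : ∫ x, x ∂(μ.map (fun ω => c * (T (k-1) ω - T k ω)))
        = ∫ ω, c * (T (k-1) ω - T k ω) ∂μ :=
      integral_map hXm.aemeasurable aestronglyMeasurable_id
    rw [← h1, hlawj, exp_one_mean]
  have hXpos : ∀ᵐ ω ∂μ, 0 ≤ c * (T (k-1) ω - T k ω) := by
    have h2 : μ.map (fun ω => c * (T (k-1) ω - T k ω)) (Set.Iio 0) = 0 := by
      rw [hlawj]; exact exp_one_Iio
    rw [Measure.map_apply hXm measurableSet_Iio] at h2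
    rw [ae_iff]
    simpa [not_le, Set.preimage] using h2
  have hDeq : (fun ω => T (k-1) ω - T k ω) = fun ω => c⁻¹ * (c * (T (k-1) ω - T k ω)) := by
    funext ω; field_simp
  refine ⟨?_, ?_, ?_⟩
  · rw [hDeq]; exact hXint.const_mul _
  · rw [hDeq, MeasureTheory.integral_const_mul c⁻¹ _, hXE, mul_one, hcval, inv_div]
  · filter_upwards [hXpos] with ω hω
    nlinarith

lemma T_telescope {ω : Ω} (h0 : T n ω = 0) {r : ℕ} (hrn : r ≤ n) :
    T r ω = ∑ k ∈ Finset.Icc (r+1) n, (T (k-1) ω - T k ω) := by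
  have key : ∀ d r, r + d = n →
      T r ω = ∑ k ∈ Finset.Icc (r+1) n, (T (k-1) ω - T k ω) + T n ω := by
    intro d
    induction d with
    | zero =>
      intro r hr
      have : r = n := by omega
      rw [this, Finset.Icc_eq_empty (by omega)]
      simp
    | succ d ih =>
      intro r hr
      have h1 : Finset.Icc (r+1) n = insert (r+1) (Finset.Icc (r+2) n) := by
        ext x; simp only [Finset.mem_Icc, Finset.mem_insert]; omega
      have hnotmem : (r+1) ∉ Finset.Icc (r+2) n := by
        simp only [Finset.mem_Icc]; omega
      rw [h1, Finset.sum_insert hnotmem, show r + 1 - 1 = r from rfl]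
      have hih := ih (r+1) (by omega)
      linarith
  have hkey := key (n - r) r (by omega)
  rw [h0] at hkey
  simpa using hkey

lemma T_antitone {ω : Ω} (hstep : ∀ k, 2 ≤ k → k ≤ n → 0 ≤ T (k-1) ω - T k ω) :
    ∀ a b, 1 ≤ a → a ≤ b → b ≤ n → T b ω ≤ T a ω := by
  intro a b h1 hab hbn
  induction b with
  | zero => omega
  | succ b ih =>
    rcases Nat.eq_or_lt_of_le hab with h | h
    · rw [← h]
    · have hb : T b ω ≤ T a ω := ih (by omega) (by omega)
      have hs := hstep (b+1) (by omega) hbn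
      rw [show b + 1 - 1 = b from rfl] at hs
      linarith

lemma measurable_comp_P {P : ℕ → Ω → Finset (Finset (Fin n))}
    (hmeas : ∀ k p, MeasurableSet {ω | P k ω = p}) (k : ℕ)
    (g : Finset (Finset (Fin n)) → ℝ) : Measurable (fun ω => g (P k ω)) := by
  intro s hs
  have heq : (fun ω => g (P k ω)) ⁻¹' s
      = ⋃ p ∈ {p : Finset (Finset (Fin n)) | g p ∈ s}, {ω | P k ω = p} := by
    ext ω
    simp only [Set.mem_preimage, Set.mem_iUnion, Set.mem_setOf_eq, exists_prop]
    constructor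
    · intro h; exact ⟨P k ω, h, rfl⟩
    · rintro ⟨p, hp, hPp⟩; rw [hPp]; exact hp
  rw [heq]
  exact MeasurableSet.biUnion (Set.to_countable _) (fun p _ => hmeas k p)

end Times

/-- For `0 ≤ α ≤ 1` and `m = ⌊n^α⌋`, the truncated external length
`L̂_n^{α,1} = Σ_i (T_{ρ(i)} ∧ T_m − T_{ρ(i)} ∧ T_n)` has expectation `2(n−m)/(n−1)`. -/
theorem truncated_external_length_expectation {Ω : Type*} [MeasurableSpace Ω] (μ : Measure Ω)
    [IsProbabilityMeasure μ] (n : ℕ) (hn : 2 ≤ n)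
    (P : ℕ → Ω → Finset (Finset (Fin n))) (hP : IsKingmanPartition n μ P)
    (T : ℕ → Ω → ℝ) (hT : IsKingmanTimes n μ T)
    (hInd : IndepFun (fun ω (k : ℕ) => T k ω) (fun ω (k : ℕ) => P k ω) μ)
    (α : ℝ) (hα : 0 ≤ α) (hα1 : α ≤ 1) :
    ∫ ω, (∑ i : Fin n,
        (min (T (rho n P i ω) ω) (T ⌊(n : ℝ) ^ α⌋₊ ω)
          - min (T (rho n P i ω) ω) (T n ω))) ∂μ
      = 2 * ((n : ℝ) - (⌊(n : ℝ) ^ α⌋₊ : ℝ)) / ((n : ℝ) - 1) := by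
  classical
  have hmeas := hP.1
  set m := ⌊(n : ℝ) ^ α⌋₊ with hm
  have hn1R : (1:ℝ) ≤ (n:ℝ) := by exact_mod_cast (by omega : 1 ≤ n)
  have hm1 : 1 ≤ m := by
    rw [hm]
    apply Nat.le_floor
    rw [Nat.cast_one]
    exact Real.one_le_rpow hn1R hα
  have hmn : m ≤ n := by
    have h1 : (n:ℝ) ^ α ≤ (n:ℝ) ^ (1:ℝ) := Real.rpow_le_rpow_of_exponent_le hn1R hα1
    rw [Real.rpow_one] at h1
    calc m ≤ ⌊(n:ℝ)⌋₊ := Nat.floor_le_floor h1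
      _ = n := Nat.floor_natCast n
  have hn1 : (n:ℝ) - 1 ≠ 0 := by
    have : (2:ℝ) ≤ (n:ℝ) := by exact_mod_cast hn
    linarith
  have hT0ae := hT.2.1
  have hTnonneg : ∀ᵐ ω ∂μ, ∀ k, 2 ≤ k → k ≤ n → 0 ≤ T (k-1) ω - T k ω := by
    rw [ae_all_iff]
    intro k
    by_cases h : 2 ≤ k ∧ k ≤ n
    · filter_upwards [(kingmanTimes_facts hT h.1 h.2).2.2] with ω hω _ _
      exact hω
    · exact ae_of_all _ (fun ω h2 hkn => absurd ⟨h2, hkn⟩ h)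
  have hcong : ∀ᵐ ω ∂μ,
      (∑ i : Fin n, (min (T (rho n P i ω) ω) (T m ω) - min (T (rho n P i ω) ω) (T n ω)))
      = ∑ k ∈ Finset.Icc (m+1) n, ((T (k-1) ω - T k ω) * (sCount n (P k ω) : ℝ)) := by
    filter_upwards [ae_goodOmega hP, hT0ae, hTnonneg] with ω hg h0 hstep
    have hanti := T_antitone hstep
    have hterm : ∀ i : Fin n,
        min (T (rho n P i ω) ω) (T m ω) - min (T (rho n P i ω) ω) (T n ω)
        = ∑ k ∈ Finset.Icc (m+1) n,
            (if rho n P i ω < k then T (k-1) ω - T k ω else 0) := by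
      intro i
      obtain ⟨hr1, hrn, hriff⟩ := goodOmega_rho hn hg i
      have hmin1 : min (T (rho n P i ω) ω) (T m ω) = T (max (rho n P i ω) m) ω := by
        rcases le_total (rho n P i ω) m with h | h
        · rw [max_eq_right h, min_eq_right (hanti (rho n P i ω) m hr1 h hmn)]
        · rw [max_eq_left h, min_eq_left (hanti m (rho n P i ω) hm1 h hrn)]
      have hmin2 : min (T (rho n P i ω) ω) (T n ω) = T n ω :=
        min_eq_right (hanti (rho n P i ω) n hr1 hrn le_rfl)
      rw [hmin1, hmin2, h0, sub_zero]
      rw [T_telescope h0 (max_le hrn hmn)]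
      have hset : Finset.Icc (max (rho n P i ω) m + 1) n
          = (Finset.Icc (m+1) n).filter (fun k => rho n P i ω < k) := by
        ext x; simp only [Finset.mem_Icc, Finset.mem_filter]; omega
      rw [hset, ← Finset.sum_filter]
    rw [Finset.sum_congr rfl (fun i _ => hterm i), Finset.sum_comm]
    apply Finset.sum_congr rfl
    intro k hk
    rw [Finset.mem_Icc] at hk
    rw [← Finset.sum_filter, Finset.sum_const, nsmul_eq_mul]
    have hfe : Finset.univ.filter (fun i : Fin n => rho n P i ω < k)
        = Finset.univ.filter (fun i : Fin n => ({i} : Finset (Fin n)) ∈ P k ω) := by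
      apply Finset.filter_congr
      intro i _
      exact ((goodOmega_rho hn hg i).2.2 k (by omega) hk.2).symm
    rw [hfe, card_singleton_mem]
    ring
  rw [integral_congr_ae hcong]
  have hfacts : ∀ k ∈ Finset.Icc (m+1) n,
      Integrable (fun ω => (T (k-1) ω - T k ω) * (sCount n (P k ω) : ℝ)) μ ∧
      ∫ ω, (T (k-1) ω - T k ω) * (sCount n (P k ω) : ℝ) ∂μ = 2 / ((n:ℝ) - 1) := by
    intro k hk
    rw [Finset.mem_Icc] at hk
    have hk2 : 2 ≤ k := by omega
    have hkn : k ≤ n := hk.2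
    obtain ⟨hDint, hDE, _⟩ := kingmanTimes_facts hT hk2 hkn
    have hYmeas : Measurable (fun ω => (sCount n (P k ω) : ℝ)) :=
      measurable_comp_P hmeas k (fun p => (sCount n p : ℝ))
    have hYbd : ∀ ω, |(sCount n (P k ω) : ℝ)| ≤ (Fintype.card (Finset (Fin n)) : ℝ) := by
      intro ω
      rw [abs_of_nonneg (by positivity)]
      have h1 : sCount n (P k ω) ≤ Fintype.card (Finset (Fin n)) :=
        le_trans (Finset.card_filter_le _ _) (Finset.card_le_univ _)
      exact_mod_cast h1
    have hYint : Integrable (fun ω => (sCount n (P k ω) : ℝ)) μ :=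
      Integrable.mono' (integrable_const _) hYmeas.aestronglyMeasurable (ae_of_all _ hYbd)
    have hindep : IndepFun (fun ω => T (k-1) ω - T k ω)
        (fun ω => (sCount n (P k ω) : ℝ)) μ := by
      have hφ : Measurable (fun u : ℕ → ℝ => u (k-1) - u k) :=
        (measurable_pi_apply (k-1)).sub (measurable_pi_apply k)
      have hψ : Measurable (fun v : ℕ → Finset (Finset (Fin n)) => (sCount n (v k) : ℝ)) := by
        have h1 : Measurable (fun p : Finset (Finset (Fin n)) => (sCount n p : ℝ)) :=
          measurable_from_top
        exact h1.comp (measurable_pi_apply k)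
      exact hInd.comp hφ hψ
    refine ⟨hindep.integrable_mul hDint hYint, ?_⟩
    have hprod := hindep.integral_fun_mul_eq_mul_integral hDint.1 hYint.1
    rw [show (∫ ω, (T (k-1) ω - T k ω) * (sCount n (P k ω) : ℝ) ∂μ)
        = (∫ ω, (T (k-1) ω - T k ω) ∂μ) * (∫ ω, (sCount n (P k ω) : ℝ) ∂μ) from hprod]
    rw [hDE, sCount_integral hn hP k (by omega) hkn]
    have hkR : (2:ℝ) ≤ (k:ℝ) := by exact_mod_cast hk2
    have hkk : (k:ℝ) * ((k:ℝ) - 1) ≠ 0 := by nlinarith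
    rw [div_mul_div_comm, mul_comm (2:ℝ) ((k:ℝ) * ((k:ℝ) - 1)),
      mul_div_mul_left _ _ hkk]
  rw [integral_finset_sum _ (fun k hk => (hfacts k hk).1)]
  rw [Finset.sum_congr rfl (fun k hk => (hfacts k hk).2)]
  rw [Finset.sum_const, Nat.card_Icc, nsmul_eq_mul]
  rw [show n + 1 - (m + 1) = n - m by omega, Nat.cast_sub hmn]
  field_simp
end

section
/- In Kingman's n-coalescent, ρ := ρ(1) satisfies P(ρ < k) = k(k-1)/(n(n-1)) for 1 ≤ k ≤ n. -/
open MeasureTheory ProbabilityTheory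

open scoped Classical
set_option linter.unusedVariables false
set_option linter.unusedSectionVars false

namespace KingmanAux

variable {n : ℕ}

/-- merged partition -/
def mrg (q : Finset (Fin n) × Finset (Fin n)) (p : Finset (Finset (Fin n))) :
    Finset (Finset (Fin n)) := insert (q.1 ∪ q.2) ((p.erase q.1).erase q.2)

/-- `p` is a genuine partition of `Fin n` into `k` blocks. -/
def Good (n k : ℕ) (p : Finset (Finset (Fin n))) : Prop :=
  p.card = k ∧ (∀ B ∈ p, B.Nonempty) ∧
  (∀ B ∈ p, ∀ C ∈ p, B ≠ C → Disjoint B C) ∧ (∀ i : Fin n, ∃ B ∈ p, i ∈ B)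

lemma good_merge {k : ℕ} {p : Finset (Finset (Fin n))} (hg : Good n k p)
    {q : Finset (Fin n) × Finset (Fin n)} (h1 : q.1 ∈ p) (h2 : q.2 ∈ p) (hne : q.1 ≠ q.2) :
    Good n (k - 1) (mrg q p) := by
  obtain ⟨hcard, hne0, hdisj, hcov⟩ := hg
  have hk2 : 2 ≤ k := by
    rw [← hcard]
    exact Finset.one_lt_card.mpr ⟨q.1, h1, q.2, h2, hne⟩
  have h2e : q.2 ∈ p.erase q.1 := Finset.mem_erase.mpr ⟨hne.symm, h2⟩
  have hEcard : ((p.erase q.1).erase q.2).card = k - 2 := by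
    rw [Finset.card_erase_of_mem h2e, Finset.card_erase_of_mem h1, hcard]; omega
  have hnotmem : q.1 ∪ q.2 ∉ (p.erase q.1).erase q.2 := by
    intro hmem
    obtain ⟨hbq2, hbq1, hbp⟩ := Finset.mem_erase.mp hmem |>.imp id (fun h => Finset.mem_erase.mp h) |> fun ⟨a, b, c⟩ => (⟨a, b, c⟩ : _ ∧ _ ∧ _)
    have hd : Disjoint (q.1 ∪ q.2) q.1 := hdisj _ hbp _ h1 hbq1
    have : Disjoint q.1 q.1 := (Finset.disjoint_union_left.mp hd).1
    exact (hne0 _ h1).ne_empty (disjoint_self.mp this)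
  refine ⟨?_, ?_, ?_, ?_⟩
  · rw [mrg, Finset.card_insert_of_notMem hnotmem, hEcard]; omega
  · intro B hB
    rcases Finset.mem_insert.mp hB with h | h
    · subst h; exact (hne0 _ h1).mono Finset.subset_union_left
    · exact hne0 _ (Finset.mem_erase.mp (Finset.mem_erase.mp h).2).2
  · intro B hB C hC hBC
    rcases Finset.mem_insert.mp hB with h | h <;> rcases Finset.mem_insert.mp hC with h' | h'
    · exact absurd (h.trans h'.symm) hBC
    · subst h
      have hC1 := Finset.mem_erase.mp h'
      have hC2 := Finset.mem_erase.mp hC1.2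
      exact Finset.disjoint_union_left.mpr
        ⟨hdisj _ h1 _ hC2.2 (Ne.symm hC2.1), hdisj _ h2 _ hC2.2 (Ne.symm hC1.1)⟩
    · subst h'
      have hB1 := Finset.mem_erase.mp h
      have hB2 := Finset.mem_erase.mp hB1.2
      exact (Finset.disjoint_union_left.mpr
        ⟨hdisj _ h1 _ hB2.2 (Ne.symm hB2.1), hdisj _ h2 _ hB2.2 (Ne.symm hB1.1)⟩).symm
    · exact hdisj _ (Finset.mem_erase.mp (Finset.mem_erase.mp h).2).2
        _ (Finset.mem_erase.mp (Finset.mem_erase.mp h').2).2 hBC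
  · intro i
    obtain ⟨B, hB, hiB⟩ := hcov i
    by_cases hB1 : B = q.1
    · exact ⟨q.1 ∪ q.2, Finset.mem_insert_self _ _, Finset.mem_union_left _ (hB1 ▸ hiB)⟩
    by_cases hB2 : B = q.2
    · exact ⟨q.1 ∪ q.2, Finset.mem_insert_self _ _, Finset.mem_union_right _ (hB2 ▸ hiB)⟩
    · exact ⟨B, Finset.mem_insert_of_mem (Finset.mem_erase.mpr ⟨hB2,
        Finset.mem_erase.mpr ⟨hB1, hB⟩⟩), hiB⟩

lemma singleton_mem_mrg_iff {k : ℕ} {p : Finset (Finset (Fin n))} (hg : Good n k p)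
    {i : Fin n} (hi : {i} ∈ p)
    {q : Finset (Fin n) × Finset (Fin n)} (h1 : q.1 ∈ p) (h2 : q.2 ∈ p) (hne : q.1 ≠ q.2) :
    ({i} ∈ mrg q p) ↔ (q.1 ≠ {i} ∧ q.2 ≠ {i}) := by
  obtain ⟨hcard, hne0, hdisj, hcov⟩ := hg
  constructor
  · intro hmem
    rcases Finset.mem_insert.mp hmem with h | h
    · constructor
      · intro h1e
        have : q.2 ⊆ {i} := h ▸ Finset.subset_union_right
        have : q.2 = {i} := (Finset.subset_singleton_iff.mp this).resolve_left
          (hne0 _ h2).ne_empty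
        exact hne (h1e.trans this.symm)
      · intro h2e
        have : q.1 ⊆ {i} := h ▸ Finset.subset_union_left
        have : q.1 = {i} := (Finset.subset_singleton_iff.mp this).resolve_left
          (hne0 _ h1).ne_empty
        exact hne (this.trans h2e.symm)
    · have h' := Finset.mem_erase.mp h
      have h'' := Finset.mem_erase.mp h'.2
      exact ⟨Ne.symm h''.1, Ne.symm h'.1⟩
  · intro ⟨ha, hb⟩
    exact Finset.mem_insert_of_mem (Finset.mem_erase.mpr ⟨Ne.symm hb,
      Finset.mem_erase.mpr ⟨Ne.symm ha, hi⟩⟩)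



/-- number of ordered pairs of distinct blocks whose merge yields `p'` -/
def cnt (p p' : Finset (Finset (Fin n))) : ℕ :=
  (Finset.univ.filter (fun q : Finset (Fin n) × Finset (Fin n) =>
    q.1 ∈ p ∧ q.2 ∈ p ∧ q.1 ≠ q.2 ∧ p' = mrg q p)).card

lemma mergeProb_eq (k : ℕ) (p p' : Finset (Finset (Fin n))) :
    mergeProb n k p p' = (cnt p p' : ℝ) / ((k : ℝ) * ((k : ℝ) - 1)) := by
  rw [mergeProb, cnt]
  congr 2
  rw [Nat.card_eq_fintype_card, Fintype.card_subtype]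
  rfl

lemma cnt_eq_zero_of_not_good {k : ℕ} {p p' : Finset (Finset (Fin n))} (hg : Good n k p)
    (h' : ¬ Good n (k - 1) p') : cnt p p' = 0 := by
  rw [cnt, Finset.card_eq_zero, Finset.filter_eq_empty_iff]
  rintro q - ⟨h1, h2, hne, heq⟩
  exact h' (heq ▸ good_merge hg h1 h2 hne)

lemma sum_cnt {k : ℕ} {p : Finset (Finset (Fin n))} (hg : Good n k p)
    {i : Fin n} (hi : {i} ∈ p) :
    ∑ p' ∈ Finset.univ.filter (fun p' : Finset (Finset (Fin n)) => {i} ∈ p'), cnt p p'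
      = (k - 1) * (k - 1) - (k - 1) := by
  have hcard : (p.erase {i}).card = k - 1 := by
    rw [Finset.card_erase_of_mem hi, hg.1]
  have key := Finset.card_eq_sum_card_fiberwise (s := (p.erase {i}).offDiag)
    (t := Finset.univ.filter (fun p' : Finset (Finset (Fin n)) => {i} ∈ p'))
    (f := fun q => mrg q p) ?_
  · rw [Finset.offDiag_card, hcard] at key
    rw [key]
    apply Finset.sum_congr rfl
    intro p' hp'
    have hip' : {i} ∈ p' := (Finset.mem_filter.mp hp').2
    rw [cnt]
    congr 1
    ext q
    simp only [Finset.mem_filter, Finset.mem_offDiag, Finset.mem_univ, true_and]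
    constructor
    · intro h
      obtain ⟨hq1, hq2, hne, heq⟩ := h
      have hne' := (singleton_mem_mrg_iff hg hi hq1 hq2 hne).mp (heq ▸ hip')
      exact ⟨⟨Finset.mem_erase.mpr ⟨hne'.1, hq1⟩, Finset.mem_erase.mpr ⟨hne'.2, hq2⟩, hne⟩,
        heq.symm⟩
    · intro h
      obtain ⟨⟨hq1, hq2, hne⟩, heq⟩ := h
      exact ⟨(Finset.mem_erase.mp hq1).2, (Finset.mem_erase.mp hq2).2, hne, heq.symm⟩

  · intro q hq
    rw [Finset.mem_coe, Finset.mem_offDiag] at hq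
    obtain ⟨hq1, hq2, hne⟩ := hq
    have h1 := Finset.mem_erase.mp hq1
    have h2 := Finset.mem_erase.mp hq2
    simp only [Finset.mem_coe, Finset.mem_filter, Finset.mem_univ, true_and]
    exact (singleton_mem_mrg_iff hg hi h1.2 h2.2 hne).mpr ⟨h1.1, h2.1⟩

lemma sum_mergeProb {k : ℕ} (hk : 2 ≤ k) {p : Finset (Finset (Fin n))} (hg : Good n k p)
    {i : Fin n} (hi : {i} ∈ p) :
    ∑ p' ∈ Finset.univ.filter
        (fun p' : Finset (Finset (Fin n)) => Good n (k - 1) p' ∧ {i} ∈ p'),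
      mergeProb n k p p' = ((k : ℝ) - 2) / (k : ℝ) := by
  have hsub : Finset.univ.filter
      (fun p' : Finset (Finset (Fin n)) => Good n (k - 1) p' ∧ {i} ∈ p')
      ⊆ Finset.univ.filter (fun p' : Finset (Finset (Fin n)) => {i} ∈ p') := by
    intro p' hp'
    simp only [Finset.mem_filter] at *
    tauto
  rw [Finset.sum_subset hsub ?van]
  case van =>
    intro p' hp' hp2
    simp only [Finset.mem_filter, Finset.mem_univ, true_and] at hp' hp2
    rw [mergeProb_eq, cnt_eq_zero_of_not_good hg (fun h => hp2 ⟨h, hp'⟩)]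
    simp
  have hsum : ∑ p' ∈ Finset.univ.filter
      (fun p' : Finset (Finset (Fin n)) => {i} ∈ p'), mergeProb n k p p'
      = (((k - 1) * (k - 1) - (k - 1) : ℕ) : ℝ) / ((k : ℝ) * ((k : ℝ) - 1)) := by
    rw [Finset.sum_congr rfl fun p' _ => mergeProb_eq k p p', ← Finset.sum_div,
      ← Nat.cast_sum, sum_cnt hg hi]
  rw [hsum]
  have h1 : (1 : ℕ) ≤ k - 1 := by omega
  have hcast : (((k - 1) * (k - 1) - (k - 1) : ℕ) : ℝ)
      = ((k : ℝ) - 1) * ((k : ℝ) - 2) := by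
    have : (k - 1) * (k - 1) - (k - 1) = (k - 1) * (k - 2) := by
      cases k with
      | zero => omega
      | succ m => cases m with
        | zero => omega
        | succ l => simp [Nat.succ_sub_one]; ring_nf; omega
    rw [this]
    push_cast [Nat.cast_sub (by omega : 1 ≤ k), Nat.cast_sub hk]
    ring
  rw [hcast]
  have hk0 : (k : ℝ) ≠ 0 := by positivity
  have hk1 : (k : ℝ) - 1 ≠ 0 := by
    have : (2:ℝ) ≤ (k:ℝ) := by exact_mod_cast hk
    intro h; linarith
  field_simp


variable {Ω : Type*} [MeasurableSpace Ω]

/-- extend a tuple of partitions to a function on ℕ -/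
def hfun (n : ℕ) (b : Fin (n + 1) → Finset (Finset (Fin n))) : ℕ → Finset (Finset (Fin n)) :=
  fun j => if h : j ≤ n then b ⟨j, by omega⟩ else ∅

lemma hfun_eq (b : Fin (n + 1) → Finset (Finset (Fin n))) {j : ℕ} (hj : j ≤ n) :
    hfun n b j = b ⟨j, by omega⟩ := dif_pos hj

lemma hfun_fin (b : Fin (n + 1) → Finset (Finset (Fin n))) (j : Fin (n + 1)) :
    hfun n b (j : ℕ) = b j := by
  rw [hfun_eq b (by omega)]

/-- the event that the chain follows history `b` on levels `[k, n]` -/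
def Hev (P : ℕ → Ω → Finset (Finset (Fin n))) (k : ℕ)
    (b : Fin (n + 1) → Finset (Finset (Fin n))) : Set Ω :=
  {ω | ∀ j, k ≤ j → j ≤ n → P j ω = hfun n b j}

def canon (k : ℕ) (b : Fin (n + 1) → Finset (Finset (Fin n))) : Prop :=
  ∀ j : Fin (n + 1), (j : ℕ) < k → b j = ∅

noncomputable def HistSet (n : ℕ) (i : Fin n) (k : ℕ) : Finset (Fin (n + 1) → Finset (Finset (Fin n))) :=
  Finset.univ.filter (fun b => canon k b ∧
    ∀ j : Fin (n + 1), k ≤ (j : ℕ) → Good n j (b j) ∧ {i} ∈ b j)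

noncomputable def Canon1 (n : ℕ) (i : Fin n) (k : ℕ) : Finset (Fin (n + 1) → Finset (Finset (Fin n))) :=
  Finset.univ.filter (fun b => canon k b ∧ ∀ j : Fin (n + 1), k ≤ (j : ℕ) → {i} ∈ b j)

def Sev (P : ℕ → Ω → Finset (Finset (Fin n))) (i : Fin n) (k : ℕ) : Set Ω :=
  {ω | ∀ j, k ≤ j → j ≤ n → {i} ∈ P j ω}



lemma measurable_Hev {P : ℕ → Ω → Finset (Finset (Fin n))}
    (hmeas : ∀ k p, MeasurableSet {ω | P k ω = p}) (k : ℕ)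
    (b : Fin (n + 1) → Finset (Finset (Fin n))) : MeasurableSet (Hev P k b) := by
  have : Hev P k b = ⋂ j : ℕ, {ω | k ≤ j → j ≤ n → P j ω = hfun n b j} := by
    ext ω; simp [Hev, Set.mem_iInter]
  rw [this]
  apply MeasurableSet.iInter
  intro j
  by_cases h1 : k ≤ j
  · by_cases h2 : j ≤ n
    · simp only [h1, h2, forall_true_left]
      exact hmeas j _
    · have : {ω | k ≤ j → j ≤ n → P j ω = hfun n b j} = Set.univ := by
        ext ω; simp [h2]
      rw [this]; exact MeasurableSet.univ
  · have : {ω | k ≤ j → j ≤ n → P j ω = hfun n b j} = Set.univ := by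
      ext ω; simp [h1]
    rw [this]; exact MeasurableSet.univ

lemma good_sing (n : ℕ) : Good n n (Finset.univ.image (fun i : Fin n => ({i} : Finset (Fin n)))) := by
  refine ⟨?_, ?_, ?_, ?_⟩
  · rw [Finset.card_image_of_injective _ (fun a b h => by
      simpa using h), Finset.card_univ, Fintype.card_fin]
  · intro B hB
    obtain ⟨a, -, rfl⟩ := Finset.mem_image.mp hB
    exact ⟨a, Finset.mem_singleton_self a⟩
  · intro B hB C hC hBC
    obtain ⟨a, -, rfl⟩ := Finset.mem_image.mp hB
    obtain ⟨c, -, rfl⟩ := Finset.mem_image.mp hC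
    simp only [Finset.disjoint_singleton_right, Finset.mem_singleton]
    intro h; exact hBC (by rw [h])
  · intro i
    exact ⟨{i}, Finset.mem_image.mpr ⟨i, Finset.mem_univ i, rfl⟩, Finset.mem_singleton_self i⟩

lemma Hev_top (P : ℕ → Ω → Finset (Finset (Fin n)))
    (b : Fin (n + 1) → Finset (Finset (Fin n))) :
    Hev P n b = {ω | P n ω = b ⟨n, by omega⟩} := by
  ext ω
  constructor
  · intro h
    have := h n le_rfl le_rfl
    rwa [hfun_eq b le_rfl] at this
  · intro h j hj1 hj2
    have : j = n := le_antisymm hj2 hj1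
    subst this
    rwa [hfun_eq b le_rfl]

lemma Sev_eq_biUnion (P : ℕ → Ω → Finset (Finset (Fin n))) (i : Fin n) {k : ℕ} (hk : k ≤ n) :
    Sev P i k = ⋃ b ∈ Canon1 n i k, Hev P k b := by
  ext ω
  constructor
  · intro hω
    refine Set.mem_iUnion₂.mpr
      ⟨fun j : Fin (n + 1) => if k ≤ (j : ℕ) then P (j : ℕ) ω else ∅, ?_, ?_⟩
    · rw [Canon1, Finset.mem_filter]
      refine ⟨Finset.mem_univ _, fun j hj => if_neg (by omega), fun j hj => ?_⟩
      show {i} ∈ if k ≤ (j : ℕ) then P (j : ℕ) ω else ∅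
      rw [if_pos hj]
      exact hω (j : ℕ) hj (by omega)
    · intro j hj1 hj2
      rw [hfun_eq _ hj2]
      show P j ω = if k ≤ ((⟨j, by omega⟩ : Fin (n + 1)) : ℕ) then P ((⟨j, by omega⟩ : Fin (n + 1)) : ℕ) ω else ∅
      rw [if_pos (by simpa using hj1)]
  · intro hω
    obtain ⟨b, hb, hωb⟩ := Set.mem_iUnion₂.mp hω
    intro j hj1 hj2
    have := hωb j hj1 hj2
    rw [this, hfun_eq _ hj2]
    rw [Canon1, Finset.mem_filter] at hb
    exact hb.2.2 _ hj1


lemma mergeProb_zero {n k : ℕ} {p p' : Finset (Finset (Fin n))} (hg : Good n k p)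
    (h' : ¬ Good n (k - 1) p') : mergeProb n k p p' = 0 := by
  rw [mergeProb_eq, cnt_eq_zero_of_not_good hg h']
  simp

lemma sum_mergeProb' {n k : ℕ} (hk : 2 ≤ k) {p : Finset (Finset (Fin n))} (hg : Good n k p)
    {i : Fin n} (hi : {i} ∈ p) :
    ∑ p' ∈ Finset.univ.filter
        (fun p' : Finset (Finset (Fin n)) => Good n (k - 1) p' ∧ {i} ∈ p'),
      mergeProb n k p p' = ((k : ℝ) - 2) / (k : ℝ) := sum_mergeProb hk hg hi

lemma Hev_disjoint (P : ℕ → Ω → Finset (Finset (Fin n))) (i : Fin n) {k : ℕ} (hk : k ≤ n) :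
    Set.PairwiseDisjoint (↑(Canon1 n i k)) (fun b => Hev P k b) := by
  intro b hb c hc hbc
  simp only [Finset.coe_filter, Canon1, Set.mem_setOf_eq] at hb hc
  refine Set.disjoint_left.mpr fun ω hωb hωc => hbc ?_
  funext j
  rcases lt_or_ge (j : ℕ) k with h | h
  · rw [hb.2.1 j h, hc.2.1 j h]
  · have h1 : P (j : ℕ) ω = hfun n b (j : ℕ) := hωb (j : ℕ) h (by omega)
    have h2 : P (j : ℕ) ω = hfun n c (j : ℕ) := hωc (j : ℕ) h (by omega)
    rw [hfun_fin] at h1 h2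
    rw [← h1, ← h2]

lemma meas_Sev (μ : Measure Ω) {P : ℕ → Ω → Finset (Finset (Fin n))}
    (hmeas : ∀ k p, MeasurableSet {ω | P k ω = p}) (i : Fin n) {k : ℕ} (hk : k ≤ n) :
    μ (Sev P i k) = ∑ b ∈ Canon1 n i k, μ (Hev P k b) := by
  rw [Sev_eq_biUnion P i hk]
  exact measure_biUnion_finset (Hev_disjoint P i hk) (fun b _ => measurable_Hev hmeas k b)

lemma Hev_null (μ : Measure Ω) [IsProbabilityMeasure μ]
    {P : ℕ → Ω → Finset (Finset (Fin n))} (hP : IsKingmanPartition n μ P) :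
    ∀ d k, 1 ≤ k → k ≤ n → n - k = d →
    ∀ b : Fin (n + 1) → Finset (Finset (Fin n)), canon k b →
    (∃ j : Fin (n + 1), k ≤ (j : ℕ) ∧ ¬ Good n (j : ℕ) (b j)) → μ (Hev P k b) = 0 := by
  intro d
  induction d with
  | zero =>
    intro k hk1 hk2 hd b hc hbad
    have hkn : k = n := by omega
    obtain ⟨j, hj1, hj2⟩ := hbad
    have hjn : (j : ℕ) = n := by omega
    have hjeq : j = ⟨n, by omega⟩ := Fin.ext hjn
    rw [hkn, Hev_top]
    have hne : b ⟨n, by omega⟩ ≠ Finset.univ.image (fun i : Fin n => ({i} : Finset (Fin n))) := by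
      intro h
      apply hj2
      rw [hjeq] at hj2 ⊢
      rw [h]
      exact good_sing n
    have hnull : μ {ω | ¬ P n ω = Finset.univ.image (fun i : Fin n => ({i} : Finset (Fin n)))}
        = 0 := by
      have := hP.2.1
      rwa [MeasureTheory.ae_iff] at this
    refine measure_mono_null ?_ hnull
    intro ω hω
    simp only [Set.mem_setOf_eq] at hω ⊢
    rw [hω]; exact hne
  | succ d ih =>
    intro k hk1 hk2 hd b hc hbad
    have hklt : k < n := by omega
    set b' : Fin (n + 1) → Finset (Finset (Fin n)) :=
      fun j => if (j : ℕ) < k + 1 then ∅ else b j with hb'def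
    have hb'eq : ∀ j : Fin (n + 1), k + 1 ≤ (j : ℕ) → b' j = b j := by
      intro j hj
      show (if (j : ℕ) < k + 1 then ∅ else b j) = b j
      rw [if_neg (by omega)]
    have hc' : canon (k + 1) b' := fun j hj => if_pos hj
    have hsub : Hev P k b ⊆ Hev P (k + 1) b' := by
      intro ω hω j hj1 hj2
      rw [hω j (by omega) hj2, hfun_eq _ hj2, hfun_eq _ hj2, hb'eq _ (by simpa using hj1)]
    by_cases hjup : ∃ j : Fin (n + 1), k + 1 ≤ (j : ℕ) ∧ ¬ Good n (j : ℕ) (b j)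
    · obtain ⟨j, hj1, hj2⟩ := hjup
      have h0 : μ (Hev P (k + 1) b') = 0 := by
        refine ih (k + 1) (by omega) (by omega) (by omega) b' hc' ⟨j, hj1, ?_⟩
        rw [hb'eq j hj1]; exact hj2
      exact measure_mono_null hsub h0
    · push_neg at hjup
      obtain ⟨j, hj1, hj2⟩ := hbad
      have hjk : (j : ℕ) = k := by
        by_contra h
        exact hj2 (hjup j (by omega))
      have hset : Hev P k b =
          {ω | ∀ j, k + 1 ≤ j → j ≤ n → P j ω = hfun n b' j}
            ∩ {ω | P (k + 1 - 1) ω = hfun n b k} := by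
        ext ω
        constructor
        · intro hω
          refine ⟨fun j hj1 hj2 => hsub hω j hj1 hj2, ?_⟩
          show P (k + 1 - 1) ω = hfun n b k
          simpa using hω k le_rfl (by omega)
        · rintro ⟨h1, h2⟩ j' hj1' hj2'
          rcases eq_or_lt_of_le hj1' with rfl | hlt
          · simpa using h2
          · have := h1 j' hlt hj2'
            rw [this, hfun_eq _ hj2', hfun_eq _ hj2', hb'eq _ (by simpa using hlt)]
      have hts := hP.2.2 (k + 1) (by omega) (by omega) (hfun n b') (hfun n b k)
      have hgood : Good n (k + 1) (hfun n b' (k + 1)) := by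
        rw [hfun_eq _ (by omega : k + 1 ≤ n), hb'eq ⟨k + 1, by omega⟩ (by simp)]
        have := hjup ⟨k + 1, by omega⟩ (by simp)
        simpa using this
      have hbadk : ¬ Good n (k + 1 - 1) (hfun n b k) := by
        rw [hfun_eq _ (by omega : k ≤ n)]
        simp only [Nat.add_sub_cancel]
        have hjeq : j = ⟨k, by omega⟩ := Fin.ext hjk
        rw [hjeq] at hj2
        exact hj2
      rw [mergeProb_zero hgood hbadk, mul_zero] at hts
      rw [hset]
      have hfin : μ ({ω | ∀ j, k + 1 ≤ j → j ≤ n → P j ω = hfun n b' j}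
          ∩ {ω | P (k + 1 - 1) ω = hfun n b k}) ≠ ⊤ := measure_ne_top μ _
      rcases ENNReal.toReal_eq_zero_iff _ |>.mp hts with h | h
      · exact h
      · exact absurd h hfin

lemma Hev_split (μ : Measure Ω) [IsProbabilityMeasure μ]
    {P : ℕ → Ω → Finset (Finset (Fin n))} (hP : IsKingmanPartition n μ P)
    {k : ℕ} (hk1 : 1 ≤ k) (hk2 : k + 1 ≤ n)
    (b : Fin (n + 1) → Finset (Finset (Fin n))) :
    (μ (Hev P k b)).toReal
      = (μ (Hev P (k + 1) (fun j => if (j : ℕ) < k + 1 then ∅ else b j))).toReal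
        * mergeProb n (k + 1) (b ⟨k + 1, by omega⟩) (b ⟨k, by omega⟩) := by
  set b' : Fin (n + 1) → Finset (Finset (Fin n)) :=
    fun j => if (j : ℕ) < k + 1 then ∅ else b j with hb'def
  have hb'eq : ∀ j : Fin (n + 1), k + 1 ≤ (j : ℕ) → b' j = b j := by
    intro j hj
    show (if (j : ℕ) < k + 1 then ∅ else b j) = b j
    rw [if_neg (by omega)]
  have hset : Hev P k b =
      {ω | ∀ j, k + 1 ≤ j → j ≤ n → P j ω = hfun n b' j}
        ∩ {ω | P (k + 1 - 1) ω = hfun n b k} := by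
    ext ω
    constructor
    · intro hω
      constructor
      · intro j hj1 hj2
        rw [hω j (by omega) hj2, hfun_eq _ hj2, hfun_eq _ hj2, hb'eq _ (by simpa using hj1)]
      · show P (k + 1 - 1) ω = hfun n b k
        simpa using hω k le_rfl (by omega)
    · rintro ⟨h1, h2⟩ j' hj1' hj2'
      rcases eq_or_lt_of_le hj1' with rfl | hlt
      · simpa using h2
      · have := h1 j' hlt hj2'
        rw [this, hfun_eq _ hj2', hfun_eq _ hj2', hb'eq _ (by simpa using hlt)]
  have hts := hP.2.2 (k + 1) (by omega) (by omega) (hfun n b') (hfun n b k)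
  have e1 : hfun n b' (k + 1) = b ⟨k + 1, by omega⟩ := by
    rw [hfun_eq _ (by omega : k + 1 ≤ n)]
    exact hb'eq ⟨k + 1, by omega⟩ (by simp)
  have e2 : hfun n b k = b ⟨k, by omega⟩ := hfun_eq _ (by omega)
  rw [hset]
  rw [e1, e2] at hts
  convert hts using 3
  rw [e2]
  rfl

lemma Fsum (μ : Measure Ω) [IsProbabilityMeasure μ] (hn : 2 ≤ n)
    {P : ℕ → Ω → Finset (Finset (Fin n))} (hP : IsKingmanPartition n μ P) (i : Fin n) :
    ∀ d k, 1 ≤ k → k ≤ n → n - k = d →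
    ∑ b ∈ HistSet n i k, (μ (Hev P k b)).toReal
      = ((k : ℝ) * ((k : ℝ) - 1)) / ((n : ℝ) * ((n : ℝ) - 1)) := by
  have hn1 : (n : ℝ) * ((n : ℝ) - 1) ≠ 0 := by
    have h2 : (2 : ℝ) ≤ (n : ℝ) := by exact_mod_cast hn
    have : (0:ℝ) < (n : ℝ) * ((n : ℝ) - 1) := by nlinarith
    exact ne_of_gt this
  intro d
  induction d with
  | zero =>
    intro k hk1 hk2 hd
    have hkn : k = n := by omega
    rw [hkn]
    set sing : Finset (Finset (Fin n)) := Finset.univ.image (fun i : Fin n => ({i} : Finset (Fin n))) with hsing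
    have hising : {i} ∈ sing := Finset.mem_image.mpr ⟨i, Finset.mem_univ i, rfl⟩
    set b₀ : Fin (n + 1) → Finset (Finset (Fin n)) :=
      fun j => if (j : ℕ) < n then ∅ else sing with hb₀
    have hb₀n : b₀ ⟨n, by omega⟩ = sing := if_neg (by simp)
    have hb₀mem : b₀ ∈ HistSet n i n := by
      rw [HistSet, Finset.mem_filter]
      refine ⟨Finset.mem_univ _, fun j hj => if_pos hj, fun j hj => ?_⟩
      have hjlt := j.isLt
      have hjn : (j : ℕ) = n := by omega
      have : b₀ j = sing := if_neg (by omega)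
      rw [this, hjn]
      exact ⟨good_sing n, hising⟩
    have hnull : μ {ω | ¬ P n ω = sing} = 0 := by
      have := hP.2.1
      rwa [MeasureTheory.ae_iff] at this
    rw [Finset.sum_eq_single_of_mem b₀ hb₀mem ?side]
    case side =>
      intro b hb hbne
      have hbn : b ⟨n, by omega⟩ ≠ sing := by
        intro h
        apply hbne
        funext j
        rcases lt_or_ge (j : ℕ) n with hj | hj
        · rw [HistSet, Finset.mem_filter] at hb
          rw [hb.2.1 j hj]
          exact (if_pos hj).symm
        · have hjlt := j.isLt
          have hjeq : j = ⟨n, by omega⟩ := Fin.ext (show (j : ℕ) = n by omega)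
          rw [hjeq, h, hb₀n]
      rw [Hev_top]
      have : μ {ω | P n ω = b ⟨n, by omega⟩} = 0 := by
        refine measure_mono_null ?_ hnull
        intro ω hω
        simp only [Set.mem_setOf_eq] at hω ⊢
        rw [hω]; exact hbn
      rw [this]; simp
    rw [Hev_top, hb₀n]
    have h1 : μ {ω | P n ω = sing} = 1 := by
      have hms : MeasurableSet {ω | P n ω = sing} := hP.1 n sing
      have hc : {ω | P n ω = sing}ᶜ = {ω | ¬ P n ω = sing} := by
        ext ω; simp
      rw [← prob_compl_eq_zero_iff hms, hc]
      exact hnull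
    rw [h1, ENNReal.toReal_one, div_self hn1]
  | succ d ih =>
    intro k hk1 hk2 hd
    have hkn : k + 1 ≤ n := by omega
    have IH := ih (k + 1) (by omega) hkn (by omega)
    have hcoe : ∀ (m : ℕ) (h : m ≤ n), ((⟨m, by omega⟩ : Fin (n + 1)) : ℕ) = m := fun m h => rfl
    have key : ∑ b ∈ HistSet n i k, (μ (Hev P k b)).toReal
        = ∑ c ∈ (HistSet n i (k + 1)) ×ˢ
            (Finset.univ.filter (fun p' : Finset (Finset (Fin n)) => Good n k p' ∧ {i} ∈ p')),
            (μ (Hev P (k + 1) c.1)).toReal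
              * mergeProb n (k + 1) (c.1 ⟨k + 1, by omega⟩) c.2 := by
      refine Finset.sum_nbij'
        (i := fun b => (fun j : Fin (n + 1) => if (j : ℕ) < k + 1 then ∅ else b j,
          b ⟨k, by omega⟩))
        (j := fun c => fun j : Fin (n + 1) => if (j : ℕ) = k then c.2 else c.1 j)
        ?hi ?hj ?left ?right ?term
      case hi =>
        intro b hb
        rw [HistSet, Finset.mem_filter] at hb
        rw [Finset.mem_product]
        constructor
        · rw [HistSet, Finset.mem_filter]
          refine ⟨Finset.mem_univ _, fun j hj => if_pos hj, fun j hj => ?_⟩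
          show Good n j (if (j : ℕ) < k + 1 then ∅ else b j) ∧
            {i} ∈ (if (j : ℕ) < k + 1 then ∅ else b j)
          rw [if_neg (by omega)]
          exact hb.2.2 j (by omega)
        · rw [Finset.mem_filter]
          exact ⟨Finset.mem_univ _, hb.2.2 ⟨k, by omega⟩ (by exact le_rfl)⟩
      case hj =>
        intro c hc
        rw [Finset.mem_product] at hc
        obtain ⟨hc1, hc2⟩ := hc
        rw [HistSet, Finset.mem_filter] at hc1
        rw [Finset.mem_filter] at hc2
        rw [HistSet, Finset.mem_filter]
        refine ⟨Finset.mem_univ _, fun j hj => ?_, fun j hj => ?_⟩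
        · show (if (j : ℕ) = k then c.2 else c.1 j) = ∅
          rw [if_neg (by omega)]
          exact hc1.2.1 j (by omega)
        · show Good n j (if (j : ℕ) = k then c.2 else c.1 j) ∧
            {i} ∈ (if (j : ℕ) = k then c.2 else c.1 j)
          by_cases hjk : (j : ℕ) = k
          · rw [if_pos hjk, hjk]
            exact hc2.2
          · rw [if_neg hjk]
            exact hc1.2.2 j (by omega)
      case left =>
        intro b hb
        rw [HistSet, Finset.mem_filter] at hb
        funext j
        show (if (j : ℕ) = k then b ⟨k, by omega⟩
          else if (j : ℕ) < k + 1 then ∅ else b j) = b j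
        by_cases hjk : (j : ℕ) = k
        · rw [if_pos hjk]
          have : j = ⟨k, by omega⟩ := Fin.ext hjk
          rw [this]
        · rw [if_neg hjk]
          by_cases hjlt : (j : ℕ) < k + 1
          · rw [if_pos hjlt, hb.2.1 j (by omega)]
          · rw [if_neg hjlt]
      case right =>
        intro c hc
        rw [Finset.mem_product] at hc
        obtain ⟨hc1, hc2⟩ := hc
        rw [HistSet, Finset.mem_filter] at hc1
        refine Prod.ext ?_ ?_
        · funext j
          show (if (j : ℕ) < k + 1 then ∅
            else if (j : ℕ) = k then c.2 else c.1 j) = c.1 j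
          by_cases hjlt : (j : ℕ) < k + 1
          · rw [if_pos hjlt, hc1.2.1 j (by omega)]
          · rw [if_neg hjlt, if_neg (by omega)]
        · show (if ((⟨k, by omega⟩ : Fin (n + 1)) : ℕ) = k then c.2
            else _) = c.2
          rw [if_pos rfl]
      case term =>
        intro b hb
        have := Hev_split μ hP hk1 hkn b
        rw [this]
        congr 2
        show b ⟨k + 1, by omega⟩ = if ((⟨k + 1, by omega⟩ : Fin (n + 1)) : ℕ) < k + 1
          then ∅ else b ⟨k + 1, by omega⟩
        rw [if_neg (by simp)]
    rw [key, Finset.sum_product]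
    have inner : ∀ b' ∈ HistSet n i (k + 1),
        ∑ p' ∈ Finset.univ.filter
          (fun p' : Finset (Finset (Fin n)) => Good n k p' ∧ {i} ∈ p'),
          (μ (Hev P (k + 1) b')).toReal * mergeProb n (k + 1) (b' ⟨k + 1, by omega⟩) p'
        = (μ (Hev P (k + 1) b')).toReal * (((k : ℝ) + 1 - 2) / ((k : ℝ) + 1)) := by
      intro b' hb'
      rw [HistSet, Finset.mem_filter] at hb'
      have hgood := hb'.2.2 ⟨k + 1, by omega⟩ (by exact le_rfl)
      rw [← Finset.mul_sum]
      congr 1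
      have hsm := sum_mergeProb' (n := n) (k := k + 1) (by omega) hgood.1 hgood.2
      simp only [Nat.add_sub_cancel] at hsm
      rw [hsm]
      push_cast
      ring
    rw [Finset.sum_congr rfl inner, ← Finset.sum_mul, IH]
    have hk1R : ((k : ℝ) + 1) ≠ 0 := by positivity
    push_cast
    field_simp
    ring

lemma Sev_toReal (μ : Measure Ω) [IsProbabilityMeasure μ]
    {P : ℕ → Ω → Finset (Finset (Fin n))} (hP : IsKingmanPartition n μ P) (i : Fin n)
    {k : ℕ} (hk1 : 1 ≤ k) (hk2 : k ≤ n) :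
    (μ (Sev P i k)).toReal = ∑ b ∈ HistSet n i k, (μ (Hev P k b)).toReal := by
  rw [meas_Sev μ hP.1 i hk2, ENNReal.toReal_sum (fun b _ => measure_ne_top μ _)]
  symm
  apply Finset.sum_subset
  · intro b hb
    rw [HistSet, Finset.mem_filter] at hb
    rw [Canon1, Finset.mem_filter]
    exact ⟨Finset.mem_univ _, hb.2.1, fun j hj => (hb.2.2 j hj).2⟩
  · intro b hb hbn
    rw [Canon1, Finset.mem_filter] at hb
    have hnall : ¬ ∀ j : Fin (n + 1), k ≤ (j : ℕ) → Good n (j : ℕ) (b j) ∧ {i} ∈ b j :=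
      fun hall => hbn (Finset.mem_filter.mpr ⟨Finset.mem_univ _, hb.2.1, hall⟩)
    obtain ⟨j, hj⟩ := Classical.not_forall.mp hnall
    obtain ⟨hjk, hbad⟩ := Classical.not_imp.mp hj
    have hbad' : ¬ Good n (j : ℕ) (b j) := fun hg => hbad ⟨hg, hb.2.2 j hjk⟩
    rw [Hev_null μ hP (n - k) k hk1 hk2 rfl b hb.2.1 ⟨j, hjk, hbad'⟩]
    simp

lemma rho_lt_iff (P : ℕ → Ω → Finset (Finset (Fin n))) (i : Fin n) (ω : Ω)
    {k : ℕ} (hk1 : 1 ≤ k) :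
    rho n P i ω < k ↔ ω ∈ Sev P i k := by
  rw [rho]
  set A := {m | 1 ≤ m ∧ m ≤ n ∧ {i} ∉ P m ω} with hA
  have hbdd : BddAbove A := ⟨n, fun m hm => hm.2.1⟩
  constructor
  · intro h j hj1 hj2
    by_contra hmem
    have hjA : j ∈ A := ⟨by omega, hj2, hmem⟩
    have := le_csSup hbdd hjA
    omega
  · intro h
    rcases Set.eq_empty_or_nonempty A with hAe | hAn
    · rw [hAe, csSup_empty]
      exact hk1
    · have hmem := Nat.sSup_mem hAn hbdd
      obtain ⟨h1, h2, h3⟩ := hmem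
      by_contra hlt
      push_neg at hlt
      exact h3 (h (sSup A) hlt h2)

end KingmanAux

/-- In Kingman's `n`-coalescent, the level `ρ = ρ(1)` of the internal node of the
external branch at leaf `1` satisfies `P(ρ < k) = k(k-1)/(n(n-1))` for `1 ≤ k ≤ n`. -/
theorem rho_distribution {Ω : Type*} [MeasurableSpace Ω] (μ : Measure Ω)
    [IsProbabilityMeasure μ] (n : ℕ) (hn : 2 ≤ n)
    (P : ℕ → Ω → Finset (Finset (Fin n))) (hP : IsKingmanPartition n μ P)
    (k : ℕ) (hk1 : 1 ≤ k) (hk2 : k ≤ n) :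
    (μ {ω | rho n P (⟨0, by omega⟩ : Fin n) ω < k}).toReal
      = (k : ℝ) * ((k : ℝ) - 1) / ((n : ℝ) * ((n : ℝ) - 1)) := by
  have hset : {ω | rho n P (⟨0, by omega⟩ : Fin n) ω < k}
      = KingmanAux.Sev P (⟨0, by omega⟩ : Fin n) k := by
    ext ω
    exact KingmanAux.rho_lt_iff P _ ω hk1
  rw [hset, KingmanAux.Sev_toReal μ hP _ hk1 hk2,
    KingmanAux.Fsum μ hn hP _ (n - k) k hk1 hk2 rfl]
end
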